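/- Quadratic representation of the infinite-horizon value function. Let (Q_j)_{j∈ℕ⁺} ∈ M_{ħ,≫}(H) and (R_j)_{j∈ℕ⁺} ∈ M_{ħ,≫}(U), and assume U_ad(x_0) ≠ ∅ for every x_0 ∈ H. Then for each ℓ ∈ ℕ there exists a unique P_ℓ ∈ SL_+(H) such that V(x_0;ℓ) = ⟨P_ℓ x_0, x_0⟩_H for every x_0 ∈ H. -/

import Mathlib

open scoped RealInnerProductSpace
noncomputable section

namespace ImpulseControl

/-- adjoint of a continuous linear map between real Hilbert spaces -/
def adj {E F : Type*} [NormedAddCommGroup E] [InnerProductSpace ℝ E] [CompleteSpace E]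
    [NormedAddCommGroup F] [InnerProductSpace ℝ F] [CompleteSpace F]
    (f : E →L[ℝ] F) : F →L[ℝ] E :=
  ContinuousLinearMap.adjoint f

/-- `ν(j) = j - [j/ħ]·ħ ∈ {1,…,ħ}` (where `[s] = max {k ∈ ℕ : k < s}`):
equals `ħ` when `ħ ∣ j`, else `j % ħ`. -/
def nu (hbar j : ℕ) : ℕ := if j % hbar = 0 then hbar else j % hbar

variable {H U : Type*} [NormedAddCommGroup H] [InnerProductSpace ℝ H] [CompleteSpace H]
  [NormedAddCommGroup U] [InnerProductSpace ℝ U] [CompleteSpace U]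

/-- a bounded self-adjoint nonnegative operator: membership in `SL₊` -/
def IsNonnegOp {E : Type*} [NormedAddCommGroup E] [InnerProductSpace ℝ E] [CompleteSpace E]
    (P : E →L[ℝ] E) : Prop :=
  IsSelfAdjoint P ∧ ∀ x : E, 0 ≤ ⟪P x, x⟫

/-- membership in `SL_≫`: self-adjoint, nonnegative and coercive -/
def IsCoerciveOp {E : Type*} [NormedAddCommGroup E] [InnerProductSpace ℝ E] [CompleteSpace E]
    (P : E →L[ℝ] E) : Prop :=
  IsNonnegOp P ∧ ∃ δ : ℝ, 0 < δ ∧ ∀ x : E, δ * ‖x‖ ^ 2 ≤ ⟪P x, x⟫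

/-- `M_{ħ,+}`: an `ħ`-periodic sequence of self-adjoint nonnegative operators (indices `j ≥ 1`). -/
def MemMPlus {E : Type*} [NormedAddCommGroup E] [InnerProductSpace ℝ E] [CompleteSpace E]
    (hbar : ℕ) (Q : ℕ → E →L[ℝ] E) : Prop :=
  (∀ j : ℕ, 1 ≤ j → IsNonnegOp (Q j)) ∧ ∀ j : ℕ, 1 ≤ j → Q (j + hbar) = Q j

/-- `M_{ħ,≫}`: an `ħ`-periodic sequence of self-adjoint coercive operators (indices `j ≥ 1`). -/
def MemMCoercive {E : Type*} [NormedAddCommGroup E] [InnerProductSpace ℝ E] [CompleteSpace E]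
    (hbar : ℕ) (Q : ℕ → E →L[ℝ] E) : Prop :=
  (∀ j : ℕ, 1 ≤ j → IsCoerciveOp (Q j)) ∧ ∀ j : ℕ, 1 ≤ j → Q (j + hbar) = Q j

section Defs

variable (T : ℝ → H →L[ℝ] H) (t : ℕ → ℝ) (hbar : ℕ) (B : ℕ → U →L[ℝ] H)

/-- post-impulse states: `xplusFrom T t ħ B ℓ x0 u m = x(t_{ℓ+m}^+ ; x0, u, ℓ)`. -/
def xplusFrom (ℓ : ℕ) (x0 : H) (u : ℕ → U) : ℕ → H
  | 0 => x0
  | m + 1 => T (t (ℓ + m + 1) - t (ℓ + m)) (xplusFrom ℓ x0 u m)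
      + B (nu hbar (ℓ + m + 1)) (u (ℓ + m + 1))

/-- pre-impulse states: `xtrajFrom T t ħ B ℓ x0 u m = x(t_{ℓ+m} ; x0, u, ℓ)` for `m ≥ 1`. -/
def xtrajFrom (ℓ : ℕ) (x0 : H) (u : ℕ → U) : ℕ → H
  | 0 => x0
  | m + 1 => T (t (ℓ + m + 1) - t (ℓ + m)) (xplusFrom T t hbar B ℓ x0 u m)

/-- `x(t_j^+ ; x0, u)` -/
def xplus (x0 : H) (u : ℕ → U) : ℕ → H := xplusFrom T t hbar B 0 x0 u

/-- `x(t_j ; x0, u)` for `j ≥ 1` -/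
def xtraj (x0 : H) (u : ℕ → U) : ℕ → H := xtrajFrom T t hbar B 0 x0 u

/-- the shifted admissible control set `U_ad(x0; ℓ)`; `U_ad(x0) = UadFrom T t ħ B 0 x0` -/
def UadFrom (ℓ : ℕ) (x0 : H) : Set (ℕ → U) :=
  {u | Summable (fun j : ℕ => ‖u (ℓ + j + 1)‖ ^ 2) ∧
       Summable (fun j : ℕ => ‖xtrajFrom T t hbar B ℓ x0 u (j + 1)‖ ^ 2)}

/-- exponential `ħ`-stabilizability of `[A, B_ħ, Λ_ħ]` by an `ħ`-periodic feedback law: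
every closed-loop trajectory decays like `C e^{-μ t}`. -/
def ExpStabilizable : Prop :=
  ∃ F : ℕ → H →L[ℝ] U, ∃ C μ : ℝ, 0 < C ∧ 0 < μ ∧
    ∀ (x0 : H) (u : ℕ → U),
      (∀ j : ℕ, 1 ≤ j → u j = F (nu hbar j) (xtraj T t hbar B x0 u j)) →
      ∀ (j : ℕ) (s : ℝ), t j < s → s ≤ t (j + 1) →
        ‖T (s - t j) (xplus T t hbar B x0 u j)‖ ≤ C * Real.exp (-μ * s) * ‖x0‖

/-- the infinite-horizon cost `J(u; x0, ℓ)` -/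
def Jinf (Q : ℕ → H →L[ℝ] H) (R : ℕ → U →L[ℝ] U) (ℓ : ℕ) (x0 : H) (u : ℕ → U) : ℝ :=
  ∑' m : ℕ,
    (⟪Q (ℓ + m + 1) (xtrajFrom T t hbar B ℓ x0 u (m + 1)), xtrajFrom T t hbar B ℓ x0 u (m + 1)⟫
      + ⟪R (ℓ + m + 1) (u (ℓ + m + 1)), u (ℓ + m + 1)⟫)

/-- the infinite-horizon value function `V(x0; ℓ)` -/
def Vinf (Q : ℕ → H →L[ℝ] H) (R : ℕ → U →L[ℝ] U) (ℓ : ℕ) (x0 : H) : ℝ :=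
  sInf {c : ℝ | ∃ u ∈ UadFrom T t hbar B ℓ x0, c = Jinf T t hbar B Q R ℓ x0 u}

/-- the finite-horizon cost `J(u; x0, ℓ, k̂)` with terminal weight `M` -/
def Jfin (Q : ℕ → H →L[ℝ] H) (R : ℕ → U →L[ℝ] U) (M : H →L[ℝ] H)
    (ℓ khat : ℕ) (x0 : H) (u : ℕ → U) : ℝ :=
  (∑ m ∈ Finset.Icc 1 (khat - ℓ),
    (⟪Q (ℓ + m) (xtrajFrom T t hbar B ℓ x0 u m), xtrajFrom T t hbar B ℓ x0 u m⟫
      + ⟪R (ℓ + m) (u (ℓ + m)), u (ℓ + m)⟫))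
  + ⟪M (xplusFrom T t hbar B ℓ x0 u (khat - ℓ)), xplusFrom T t hbar B ℓ x0 u (khat - ℓ)⟫

/-- the finite-horizon value function `V(x0; ℓ, k̂)` with terminal weight `M` -/
def Vfin (Q : ℕ → H →L[ℝ] H) (R : ℕ → U →L[ℝ] U) (M : H →L[ℝ] H)
    (ℓ khat : ℕ) (x0 : H) : ℝ :=
  sInf {c : ℝ | ∃ u : ℕ → U, Summable (fun j : ℕ => ‖u (ℓ + j + 1)‖ ^ 2) ∧
    c = Jfin T t hbar B Q R M ℓ khat x0 u}

/-- the `k`-th equation of the periodic Riccati-type system, where `G` is the (two-sided)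
inverse of `R_k + B_k* P_k B_k`. -/
def RicEq (Q : ℕ → H →L[ℝ] H) (R : ℕ → U →L[ℝ] U) (P : ℕ → H →L[ℝ] H)
    (G : U →L[ℝ] U) (k : ℕ) : Prop :=
  G ∘L (R k + adj (B k) ∘L P k ∘L B k) = 1 ∧
  (R k + adj (B k) ∘L P k ∘L B k) ∘L G = 1 ∧
  P (k - 1) - adj (T (t k - t (k - 1))) ∘L P k ∘L T (t k - t (k - 1)) =
    adj (T (t k - t (k - 1))) ∘L Q k ∘L T (t k - t (k - 1))
      - adj (T (t k - t (k - 1))) ∘L P k ∘L B k ∘L G ∘L adj (B k) ∘L P k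
          ∘L T (t k - t (k - 1))

/-- `P_0, …, P_ħ` is a solution of the periodic Riccati-type equation. -/
def IsRicSol (Q : ℕ → H →L[ℝ] H) (R : ℕ → U →L[ℝ] U) (P : ℕ → H →L[ℝ] H) : Prop :=
  (∀ k : ℕ, k ≤ hbar → IsNonnegOp (P k)) ∧ P 0 = P hbar ∧
  ∀ k : ℕ, 1 ≤ k → k ≤ hbar → ∃ G : U →L[ℝ] U, RicEq T t B Q R P G k

end Defs

section Proof
set_option linter.unusedSectionVars false

variable {H U : Type*} [NormedAddCommGroup H] [InnerProductSpace ℝ H] [CompleteSpace H]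
  [NormedAddCommGroup U] [InnerProductSpace ℝ U] [CompleteSpace U]
  (T : ℝ → H →L[ℝ] H) (t : ℕ → ℝ) (hbar : ℕ) (B : ℕ → U →L[ℝ] H)
  (Q : ℕ → H →L[ℝ] H) (R : ℕ → U →L[ℝ] U)

/-- the `m`-th stage cost -/
def stage (ℓ m : ℕ) (x : H) (u : ℕ → U) : ℝ :=
  ⟪Q (ℓ + m + 1) (xtrajFrom T t hbar B ℓ x u (m + 1)), xtrajFrom T t hbar B ℓ x u (m + 1)⟫
    + ⟪R (ℓ + m + 1) (u (ℓ + m + 1)), u (ℓ + m + 1)⟫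

/-- the polar form of the stage cost -/
def stageP (ℓ m : ℕ) (x : H) (u : ℕ → U) (x' : H) (u' : ℕ → U) : ℝ :=
  ⟪Q (ℓ + m + 1) (xtrajFrom T t hbar B ℓ x u (m + 1)), xtrajFrom T t hbar B ℓ x' u' (m + 1)⟫
    + ⟪R (ℓ + m + 1) (u (ℓ + m + 1)), u' (ℓ + m + 1)⟫

/-- partial sums of the cost -/
def PS (ℓ k : ℕ) (x : H) (u : ℕ → U) : ℝ :=
  ∑ m ∈ Finset.range k, stage T t hbar B Q R ℓ m x u

/-- partial sums of the polar form -/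
def PSP (ℓ k : ℕ) (x : H) (u : ℕ → U) (x' : H) (u' : ℕ → U) : ℝ :=
  ∑ m ∈ Finset.range k, stageP T t hbar B Q R ℓ m x u x' u'

/-- the finite-horizon value function (infimum over all controls) -/
def Wk (ℓ k : ℕ) (x : H) : ℝ :=
  sInf {c : ℝ | ∃ u : ℕ → U, c = PS T t hbar B Q R ℓ k x u}

lemma xplusFrom_add (ℓ : ℕ) (x x' : H) (u u' : ℕ → U) :
    ∀ m, xplusFrom T t hbar B ℓ (x + x') (u + u') m
      = xplusFrom T t hbar B ℓ x u m + xplusFrom T t hbar B ℓ x' u' m := by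
  intro m
  induction m with
  | zero => rfl
  | succ m ih =>
    simp only [xplusFrom, ih, Pi.add_apply, map_add]
    abel

lemma xplusFrom_smul (ℓ : ℕ) (a : ℝ) (x : H) (u : ℕ → U) :
    ∀ m, xplusFrom T t hbar B ℓ (a • x) (a • u) m = a • xplusFrom T t hbar B ℓ x u m := by
  intro m
  induction m with
  | zero => rfl
  | succ m ih =>
    simp only [xplusFrom, ih, Pi.smul_apply, map_smul, smul_add]

lemma xtrajFrom_add (ℓ : ℕ) (x x' : H) (u u' : ℕ → U) (m : ℕ) :
    xtrajFrom T t hbar B ℓ (x + x') (u + u') (m + 1)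
      = xtrajFrom T t hbar B ℓ x u (m + 1) + xtrajFrom T t hbar B ℓ x' u' (m + 1) := by
  simp only [xtrajFrom, xplusFrom_add, map_add]

lemma xtrajFrom_smul (ℓ : ℕ) (a : ℝ) (x : H) (u : ℕ → U) (m : ℕ) :
    xtrajFrom T t hbar B ℓ (a • x) (a • u) (m + 1)
      = a • xtrajFrom T t hbar B ℓ x u (m + 1) := by
  simp only [xtrajFrom, xplusFrom_smul, map_smul]

lemma inner_expand {E : Type*} [NormedAddCommGroup E] [InnerProductSpace ℝ E]
    (S : E →L[ℝ] E) (hS : ∀ v w : E, ⟪S v, w⟫ = ⟪v, S w⟫) (a : ℝ) (y y' : E) :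
    ⟪S (y + a • y'), y + a • y'⟫
      = ⟪S y, y⟫ + 2 * a * ⟪S y, y'⟫ + a ^ 2 * ⟪S y', y'⟫ := by
  have h : ⟪S y', y⟫ = ⟪S y, y'⟫ := by
    rw [hS y' y, real_inner_comm]
  simp only [map_add, map_smul, inner_add_left, inner_add_right, inner_smul_left,
    inner_smul_right, RCLike.ofReal_real_eq_id, id_eq, h, starRingEnd_apply, star_trivial]
  ring

end Proof

section Proof2
set_option linter.unusedSectionVars false

variable {H U : Type*} [NormedAddCommGroup H] [InnerProductSpace ℝ H] [CompleteSpace H]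
  [NormedAddCommGroup U] [InnerProductSpace ℝ U] [CompleteSpace U]
  (T : ℝ → H →L[ℝ] H) (t : ℕ → ℝ) (hbar : ℕ) (B : ℕ → U →L[ℝ] H)
  (Q : ℕ → H →L[ℝ] H) (R : ℕ → U →L[ℝ] U)

lemma PS_polar
    (hQsym : ∀ j, 1 ≤ j → ∀ v w : H, ⟪Q j v, w⟫ = ⟪v, Q j w⟫)
    (hRsym : ∀ j, 1 ≤ j → ∀ v w : U, ⟪R j v, w⟫ = ⟪v, R j w⟫)
    (ℓ k : ℕ) (a : ℝ) (x : H) (u : ℕ → U) (x' : H) (u' : ℕ → U) :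
    PS T t hbar B Q R ℓ k (x + a • x') (u + a • u')
      = PS T t hbar B Q R ℓ k x u + 2 * a * PSP T t hbar B Q R ℓ k x u x' u'
        + a ^ 2 * PS T t hbar B Q R ℓ k x' u' := by
  unfold PS PSP
  rw [Finset.mul_sum, Finset.mul_sum, ← Finset.sum_add_distrib, ← Finset.sum_add_distrib]
  refine Finset.sum_congr rfl fun m _ => ?_
  have hx : xtrajFrom T t hbar B ℓ (x + a • x') (u + a • u') (m + 1)
      = xtrajFrom T t hbar B ℓ x u (m + 1) + a • xtrajFrom T t hbar B ℓ x' u' (m + 1) := by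
    rw [xtrajFrom_add, xtrajFrom_smul]
  have hu : (u + a • u') (ℓ + m + 1) = u (ℓ + m + 1) + a • u' (ℓ + m + 1) := rfl
  unfold stage stageP
  rw [hx, hu, inner_expand _ (hQsym (ℓ + m + 1) (by omega)),
    inner_expand _ (hRsym (ℓ + m + 1) (by omega))]
  ring

lemma stage_nonneg
    (hQ0 : ∀ j, 1 ≤ j → ∀ v : H, 0 ≤ ⟪Q j v, v⟫)
    (hR0 : ∀ j, 1 ≤ j → ∀ v : U, 0 ≤ ⟪R j v, v⟫)
    (ℓ m : ℕ) (x : H) (u : ℕ → U) : 0 ≤ stage T t hbar B Q R ℓ m x u :=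
  add_nonneg (hQ0 _ (by omega) _) (hR0 _ (by omega) _)

lemma PS_nonneg
    (hQ0 : ∀ j, 1 ≤ j → ∀ v : H, 0 ≤ ⟪Q j v, v⟫)
    (hR0 : ∀ j, 1 ≤ j → ∀ v : U, 0 ≤ ⟪R j v, v⟫)
    (ℓ k : ℕ) (x : H) (u : ℕ → U) : 0 ≤ PS T t hbar B Q R ℓ k x u :=
  Finset.sum_nonneg fun m _ => stage_nonneg T t hbar B Q R hQ0 hR0 ℓ m x u

lemma PS_mono_k
    (hQ0 : ∀ j, 1 ≤ j → ∀ v : H, 0 ≤ ⟪Q j v, v⟫)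
    (hR0 : ∀ j, 1 ≤ j → ∀ v : U, 0 ≤ ⟪R j v, v⟫)
    (ℓ : ℕ) {k k' : ℕ} (hk : k ≤ k') (x : H) (u : ℕ → U) :
    PS T t hbar B Q R ℓ k x u ≤ PS T t hbar B Q R ℓ k' x u :=
  Finset.sum_le_sum_of_subset_of_nonneg (Finset.range_subset_range.2 hk)
    (fun m _ _ => stage_nonneg T t hbar B Q R hQ0 hR0 ℓ m x u)

lemma xplusFrom_zero (ℓ : ℕ) (m : ℕ) :
    xplusFrom T t hbar B ℓ (0 : H) (0 : ℕ → U) m = 0 := by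
  have := xplusFrom_smul T t hbar B ℓ (0 : ℝ) 0 0 m
  simpa using this

lemma xtrajFrom_zero (ℓ : ℕ) (m : ℕ) :
    xtrajFrom T t hbar B ℓ (0 : H) (0 : ℕ → U) (m + 1) = 0 := by
  simp only [xtrajFrom, xplusFrom_zero, map_zero]

lemma PS_zero (ℓ k : ℕ) : PS T t hbar B Q R ℓ k (0 : H) (0 : ℕ → U) = 0 := by
  unfold PS stage
  refine Finset.sum_eq_zero fun m _ => ?_
  rw [xtrajFrom_zero]
  simp

lemma PSP_zero_left (ℓ k : ℕ) (x' : H) (u' : ℕ → U) :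
    PSP T t hbar B Q R ℓ k (0 : H) (0 : ℕ → U) x' u' = 0 := by
  unfold PSP stageP
  refine Finset.sum_eq_zero fun m _ => ?_
  rw [xtrajFrom_zero]
  simp

lemma PS_smul
    (hQsym : ∀ j, 1 ≤ j → ∀ v w : H, ⟪Q j v, w⟫ = ⟪v, Q j w⟫)
    (hRsym : ∀ j, 1 ≤ j → ∀ v w : U, ⟪R j v, w⟫ = ⟪v, R j w⟫)
    (ℓ k : ℕ) (a : ℝ) (x : H) (u : ℕ → U) :
    PS T t hbar B Q R ℓ k (a • x) (a • u) = a ^ 2 * PS T t hbar B Q R ℓ k x u := by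
  have := PS_polar T t hbar B Q R hQsym hRsym ℓ k a 0 0 x u
  simpa [PS_zero, PSP_zero_left] using this

lemma PS_par
    (hQsym : ∀ j, 1 ≤ j → ∀ v w : H, ⟪Q j v, w⟫ = ⟪v, Q j w⟫)
    (hRsym : ∀ j, 1 ≤ j → ∀ v w : U, ⟪R j v, w⟫ = ⟪v, R j w⟫)
    (ℓ k : ℕ) (x : H) (u : ℕ → U) (x' : H) (u' : ℕ → U) :
    PS T t hbar B Q R ℓ k (x + x') (u + u') + PS T t hbar B Q R ℓ k (x - x') (u - u')
      = 2 * PS T t hbar B Q R ℓ k x u + 2 * PS T t hbar B Q R ℓ k x' u' := by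
  have h1 := PS_polar T t hbar B Q R hQsym hRsym ℓ k 1 x u x' u'
  have h2 := PS_polar T t hbar B Q R hQsym hRsym ℓ k (-1) x u x' u'
  have e1 : x + (1:ℝ) • x' = x + x' := by simp
  have e2 : u + (1:ℝ) • u' = u + u' := by simp
  have e3 : x + (-1:ℝ) • x' = x - x' := by simp [sub_eq_add_neg]
  have e4 : u + (-1:ℝ) • u' = u - u' := by
    funext j; simp [sub_eq_add_neg]
  rw [e1, e2] at h1
  rw [e3, e4] at h2
  rw [h1, h2]; ring

lemma PSP_sq_le
    (hQsym : ∀ j, 1 ≤ j → ∀ v w : H, ⟪Q j v, w⟫ = ⟪v, Q j w⟫)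
    (hRsym : ∀ j, 1 ≤ j → ∀ v w : U, ⟪R j v, w⟫ = ⟪v, R j w⟫)
    (hQ0 : ∀ j, 1 ≤ j → ∀ v : H, 0 ≤ ⟪Q j v, v⟫)
    (hR0 : ∀ j, 1 ≤ j → ∀ v : U, 0 ≤ ⟪R j v, v⟫)
    (ℓ k : ℕ) (x : H) (u : ℕ → U) (x' : H) (u' : ℕ → U) :
    (PSP T t hbar B Q R ℓ k x u x' u') ^ 2
      ≤ PS T t hbar B Q R ℓ k x u * PS T t hbar B Q R ℓ k x' u' := by
  have key : ∀ a : ℝ, 0 ≤ PS T t hbar B Q R ℓ k x' u' * (a * a)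
      + (2 * PSP T t hbar B Q R ℓ k x u x' u') * a + PS T t hbar B Q R ℓ k x u := by
    intro a
    have := PS_polar T t hbar B Q R hQsym hRsym ℓ k a x u x' u'
    have h0 := PS_nonneg T t hbar B Q R hQ0 hR0 ℓ k (x + a • x') (u + a • u')
    rw [this] at h0
    nlinarith [h0]
  have := discrim_le_zero key
  unfold discrim at this
  nlinarith [this]

lemma PS_sqrt_subadd
    (hQsym : ∀ j, 1 ≤ j → ∀ v w : H, ⟪Q j v, w⟫ = ⟪v, Q j w⟫)
    (hRsym : ∀ j, 1 ≤ j → ∀ v w : U, ⟪R j v, w⟫ = ⟪v, R j w⟫)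
    (hQ0 : ∀ j, 1 ≤ j → ∀ v : H, 0 ≤ ⟪Q j v, v⟫)
    (hR0 : ∀ j, 1 ≤ j → ∀ v : U, 0 ≤ ⟪R j v, v⟫)
    (ℓ k : ℕ) (x : H) (u : ℕ → U) (x' : H) (u' : ℕ → U) :
    PS T t hbar B Q R ℓ k (x + x') (u + u')
      ≤ (Real.sqrt (PS T t hbar B Q R ℓ k x u) + Real.sqrt (PS T t hbar B Q R ℓ k x' u')) ^ 2 := by
  set A := PS T t hbar B Q R ℓ k x u with hA
  set C := PS T t hbar B Q R ℓ k x' u' with hC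
  have hA0 : 0 ≤ A := PS_nonneg T t hbar B Q R hQ0 hR0 ℓ k x u
  have hC0 : 0 ≤ C := PS_nonneg T t hbar B Q R hQ0 hR0 ℓ k x' u'
  have hpol := PS_polar T t hbar B Q R hQsym hRsym ℓ k 1 x u x' u'
  have e1 : x + (1:ℝ) • x' = x + x' := by simp
  have e2 : u + (1:ℝ) • u' = u + u' := by simp
  rw [e1, e2] at hpol
  have hcs := PSP_sq_le T t hbar B Q R hQsym hRsym hQ0 hR0 ℓ k x u x' u'
  have habs : PSP T t hbar B Q R ℓ k x u x' u' ≤ Real.sqrt A * Real.sqrt C := by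
    have h1 : PSP T t hbar B Q R ℓ k x u x' u' ≤ |PSP T t hbar B Q R ℓ k x u x' u'| :=
      le_abs_self _
    have h2 : |PSP T t hbar B Q R ℓ k x u x' u'| = Real.sqrt ((PSP T t hbar B Q R ℓ k x u x' u') ^ 2) :=
      (Real.sqrt_sq_eq_abs _).symm
    have h3 : Real.sqrt ((PSP T t hbar B Q R ℓ k x u x' u') ^ 2) ≤ Real.sqrt (A * C) :=
      Real.sqrt_le_sqrt hcs
    rw [Real.sqrt_mul hA0] at h3
    linarith
  have hsq : (Real.sqrt A + Real.sqrt C) ^ 2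
      = A + 2 * (Real.sqrt A * Real.sqrt C) + C := by
    rw [add_sq, Real.sq_sqrt hA0, Real.sq_sqrt hC0]; ring
  rw [hpol, hsq]
  nlinarith [habs]

end Proof2

section Proof3
set_option linter.unusedSectionVars false

variable {H U : Type*} [NormedAddCommGroup H] [InnerProductSpace ℝ H] [CompleteSpace H]
  [NormedAddCommGroup U] [InnerProductSpace ℝ U] [CompleteSpace U]
  (T : ℝ → H →L[ℝ] H) (t : ℕ → ℝ) (hbar : ℕ) (B : ℕ → U →L[ℝ] H)
  (Q : ℕ → H →L[ℝ] H) (R : ℕ → U →L[ℝ] U)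

variable (hQsym : ∀ j, 1 ≤ j → ∀ v w : H, ⟪Q j v, w⟫ = ⟪v, Q j w⟫)
  (hRsym : ∀ j, 1 ≤ j → ∀ v w : U, ⟪R j v, w⟫ = ⟪v, R j w⟫)
  (hQ0 : ∀ j, 1 ≤ j → ∀ v : H, 0 ≤ ⟪Q j v, v⟫)
  (hR0 : ∀ j, 1 ≤ j → ∀ v : U, 0 ≤ ⟪R j v, v⟫)

lemma Wk_set_nonempty (ℓ k : ℕ) (x : H) :
    {c : ℝ | ∃ u : ℕ → U, c = PS T t hbar B Q R ℓ k x u}.Nonempty :=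
  ⟨PS T t hbar B Q R ℓ k x 0, 0, rfl⟩

include hQ0 hR0 in
lemma Wk_set_bddBelow (ℓ k : ℕ) (x : H) :
    BddBelow {c : ℝ | ∃ u : ℕ → U, c = PS T t hbar B Q R ℓ k x u} := by
  refine ⟨0, fun c hc => ?_⟩
  obtain ⟨u, rfl⟩ := hc
  exact PS_nonneg T t hbar B Q R hQ0 hR0 ℓ k x u

include hQ0 hR0 in
lemma Wk_nonneg (ℓ k : ℕ) (x : H) : 0 ≤ Wk T t hbar B Q R ℓ k x :=
  le_csInf (Wk_set_nonempty T t hbar B Q R ℓ k x)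
    (by rintro c ⟨u, rfl⟩; exact PS_nonneg T t hbar B Q R hQ0 hR0 ℓ k x u)

include hQ0 hR0 in
lemma Wk_le_PS (ℓ k : ℕ) (x : H) (u : ℕ → U) :
    Wk T t hbar B Q R ℓ k x ≤ PS T t hbar B Q R ℓ k x u :=
  csInf_le (Wk_set_bddBelow T t hbar B Q R hQ0 hR0 ℓ k x) ⟨u, rfl⟩

lemma exists_PS_lt (ℓ k : ℕ) (x : H) {ε : ℝ} (hε : 0 < ε) :
    ∃ u : ℕ → U, PS T t hbar B Q R ℓ k x u < Wk T t hbar B Q R ℓ k x + ε := by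
  have h : Wk T t hbar B Q R ℓ k x < Wk T t hbar B Q R ℓ k x + ε := by linarith
  obtain ⟨c, hc, hlt⟩ := exists_lt_of_csInf_lt (Wk_set_nonempty T t hbar B Q R ℓ k x) h
  obtain ⟨u, rfl⟩ := hc
  exact ⟨u, hlt⟩

include hQ0 hR0 in
lemma Wk_zero (ℓ k : ℕ) : Wk T t hbar B Q R ℓ k (0 : H) = 0 := by
  have h1 := Wk_le_PS T t hbar B Q R hQ0 hR0 ℓ k 0 0
  rw [PS_zero] at h1
  exact le_antisymm h1 (Wk_nonneg T t hbar B Q R hQ0 hR0 ℓ k 0)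

include hQsym hRsym hQ0 hR0 in
lemma Wk_smul_le (ℓ k : ℕ) (a : ℝ) (x : H) :
    Wk T t hbar B Q R ℓ k (a • x) ≤ a ^ 2 * Wk T t hbar B Q R ℓ k x := by
  refine le_of_forall_pos_le_add fun ε hε => ?_
  obtain ⟨u, hu⟩ := exists_PS_lt T t hbar B Q R ℓ k x (ε := ε / (a ^ 2 + 1))
    (by positivity)
  have h1 := Wk_le_PS T t hbar B Q R hQ0 hR0 ℓ k (a • x) (a • u)
  rw [PS_smul T t hbar B Q R hQsym hRsym] at h1
  have ha2 : (0:ℝ) ≤ a ^ 2 := sq_nonneg a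
  have h3 : a ^ 2 * PS T t hbar B Q R ℓ k x u
      ≤ a ^ 2 * Wk T t hbar B Q R ℓ k x + a ^ 2 * (ε / (a ^ 2 + 1)) := by nlinarith [hu, ha2]
  have h4 : a ^ 2 * (ε / (a ^ 2 + 1)) ≤ ε := by
    rw [mul_div_assoc']
    rw [div_le_iff₀ (by positivity : (0:ℝ) < a ^ 2 + 1)]
    nlinarith [hε]
  linarith

include hQsym hRsym hQ0 hR0 in
lemma Wk_smul (ℓ k : ℕ) (a : ℝ) (x : H) :
    Wk T t hbar B Q R ℓ k (a • x) = a ^ 2 * Wk T t hbar B Q R ℓ k x := by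
  rcases eq_or_ne a 0 with rfl | ha
  · simpa using Wk_zero T t hbar B Q R hQ0 hR0 ℓ k
  · refine le_antisymm (Wk_smul_le T t hbar B Q R hQsym hRsym hQ0 hR0 ℓ k a x) ?_
    have h := Wk_smul_le T t hbar B Q R hQsym hRsym hQ0 hR0 ℓ k a⁻¹ (a • x)
    rw [smul_smul, inv_mul_cancel₀ ha, one_smul] at h
    have ha2 : a ^ 2 ≠ 0 := pow_ne_zero _ ha
    have : (a⁻¹) ^ 2 = (a ^ 2)⁻¹ := by rw [inv_pow]
    rw [this] at h
    calc a ^ 2 * Wk T t hbar B Q R ℓ k x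
        ≤ a ^ 2 * ((a ^ 2)⁻¹ * Wk T t hbar B Q R ℓ k (a • x)) := by
          apply mul_le_mul_of_nonneg_left h (sq_nonneg a)
      _ = Wk T t hbar B Q R ℓ k (a • x) := by field_simp

include hQsym hRsym hQ0 hR0 in
lemma Wk_par_le (ℓ k : ℕ) (x y : H) :
    Wk T t hbar B Q R ℓ k (x + y) + Wk T t hbar B Q R ℓ k (x - y)
      ≤ 2 * Wk T t hbar B Q R ℓ k x + 2 * Wk T t hbar B Q R ℓ k y := by
  refine le_of_forall_pos_le_add fun ε hε => ?_
  obtain ⟨u, hu⟩ := exists_PS_lt T t hbar B Q R ℓ k x (ε := ε / 4) (by linarith)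
  obtain ⟨v, hv⟩ := exists_PS_lt T t hbar B Q R ℓ k y (ε := ε / 4) (by linarith)
  have h1 := Wk_le_PS T t hbar B Q R hQ0 hR0 ℓ k (x + y) (u + v)
  have h2 := Wk_le_PS T t hbar B Q R hQ0 hR0 ℓ k (x - y) (u - v)
  have hp := PS_par T t hbar B Q R hQsym hRsym ℓ k x u y v
  linarith

include hQsym hRsym hQ0 hR0 in
lemma Wk_par (ℓ k : ℕ) (x y : H) :
    Wk T t hbar B Q R ℓ k (x + y) + Wk T t hbar B Q R ℓ k (x - y)
      = 2 * Wk T t hbar B Q R ℓ k x + 2 * Wk T t hbar B Q R ℓ k y := by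
  refine le_antisymm (Wk_par_le T t hbar B Q R hQsym hRsym hQ0 hR0 ℓ k x y) ?_
  have h := Wk_par_le T t hbar B Q R hQsym hRsym hQ0 hR0 ℓ k (x + y) (x - y)
  have e1 : x + y + (x - y) = (2:ℝ) • x := by
    rw [two_smul]; abel
  have e2 : x + y - (x - y) = (2:ℝ) • y := by
    rw [two_smul]; abel
  rw [e1, e2, Wk_smul T t hbar B Q R hQsym hRsym hQ0 hR0 ℓ k 2 x,
    Wk_smul T t hbar B Q R hQsym hRsym hQ0 hR0 ℓ k 2 y] at h
  norm_num at h
  linarith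

include hQ0 hR0 in
lemma Wk_mono (ℓ : ℕ) {k k' : ℕ} (hk : k ≤ k') (x : H) :
    Wk T t hbar B Q R ℓ k x ≤ Wk T t hbar B Q R ℓ k' x := by
  refine le_of_forall_pos_le_add fun ε hε => ?_
  obtain ⟨u, hu⟩ := exists_PS_lt T t hbar B Q R ℓ k' x hε
  have h1 := Wk_le_PS T t hbar B Q R hQ0 hR0 ℓ k x u
  have h2 := PS_mono_k T t hbar B Q R hQ0 hR0 ℓ hk x u
  linarith

lemma xplusFrom_zero_ctrl_bound (ℓ : ℕ) :
    ∀ m, ∃ D : ℝ, 0 ≤ D ∧ ∀ x : H, ‖xplusFrom T t hbar B ℓ x (0 : ℕ → U) m‖ ≤ D * ‖x‖ := by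
  intro m
  induction m with
  | zero => exact ⟨1, zero_le_one, fun x => by simp [xplusFrom]⟩
  | succ m ih =>
    obtain ⟨D, hD0, hD⟩ := ih
    refine ⟨‖T (t (ℓ + m + 1) - t (ℓ + m))‖ * D, by positivity, fun x => ?_⟩
    have : xplusFrom T t hbar B ℓ x (0 : ℕ → U) (m + 1)
        = T (t (ℓ + m + 1) - t (ℓ + m)) (xplusFrom T t hbar B ℓ x (0 : ℕ → U) m) := by
      simp [xplusFrom]
    rw [this]
    calc ‖T (t (ℓ + m + 1) - t (ℓ + m)) (xplusFrom T t hbar B ℓ x (0:ℕ→U) m)‖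
        ≤ ‖T (t (ℓ + m + 1) - t (ℓ + m))‖ * ‖xplusFrom T t hbar B ℓ x (0:ℕ→U) m‖ :=
          ContinuousLinearMap.le_opNorm _ _
      _ ≤ ‖T (t (ℓ + m + 1) - t (ℓ + m))‖ * (D * ‖x‖) := by
          apply mul_le_mul_of_nonneg_left (hD x) (norm_nonneg _)
      _ = ‖T (t (ℓ + m + 1) - t (ℓ + m))‖ * D * ‖x‖ := by ring

lemma PS_zero_ctrl_bound (ℓ k : ℕ) :
    ∃ C : ℝ, 0 ≤ C ∧ ∀ x : H, PS T t hbar B Q R ℓ k x (0 : ℕ → U) ≤ C * ‖x‖ ^ 2 := by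
  induction k with
  | zero => exact ⟨0, le_refl _, fun x => by simp [PS]⟩
  | succ k ih =>
    obtain ⟨C, hC0, hC⟩ := ih
    obtain ⟨D, hD0, hD⟩ := xplusFrom_zero_ctrl_bound T t hbar B ℓ k
    refine ⟨C + ‖Q (ℓ + k + 1)‖ * (‖T (t (ℓ + k + 1) - t (ℓ + k))‖ * D) ^ 2, by positivity,
      fun x => ?_⟩
    have hsum : PS T t hbar B Q R ℓ (k+1) x (0:ℕ→U)
        = PS T t hbar B Q R ℓ k x (0:ℕ→U) + stage T t hbar B Q R ℓ k x (0:ℕ→U) := by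
      unfold PS
      rw [Finset.sum_range_succ]
    have hY : ‖xtrajFrom T t hbar B ℓ x (0:ℕ→U) (k + 1)‖
        ≤ ‖T (t (ℓ + k + 1) - t (ℓ + k))‖ * D * ‖x‖ := by
      have : xtrajFrom T t hbar B ℓ x (0:ℕ→U) (k+1)
          = T (t (ℓ + k + 1) - t (ℓ + k)) (xplusFrom T t hbar B ℓ x (0:ℕ→U) k) := rfl
      rw [this]
      calc ‖T (t (ℓ + k + 1) - t (ℓ + k)) (xplusFrom T t hbar B ℓ x (0:ℕ→U) k)‖
          ≤ ‖T (t (ℓ + k + 1) - t (ℓ + k))‖ * ‖xplusFrom T t hbar B ℓ x (0:ℕ→U) k‖ :=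
            ContinuousLinearMap.le_opNorm _ _
        _ ≤ ‖T (t (ℓ + k + 1) - t (ℓ + k))‖ * (D * ‖x‖) := by
            apply mul_le_mul_of_nonneg_left (hD x) (norm_nonneg _)
        _ = ‖T (t (ℓ + k + 1) - t (ℓ + k))‖ * D * ‖x‖ := by ring
    have hstage : stage T t hbar B Q R ℓ k x (0:ℕ→U)
        ≤ ‖Q (ℓ + k + 1)‖ * (‖T (t (ℓ + k + 1) - t (ℓ + k))‖ * D) ^ 2 * ‖x‖ ^ 2 := by
      unfold stage
      have h0 : ((0:ℕ→U)) (ℓ + k + 1) = 0 := rfl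
      rw [h0]
      simp only [map_zero, inner_zero_left, add_zero]
      calc ⟪Q (ℓ+k+1) (xtrajFrom T t hbar B ℓ x (0:ℕ→U) (k+1)), xtrajFrom T t hbar B ℓ x (0:ℕ→U) (k+1)⟫
          ≤ ‖Q (ℓ+k+1) (xtrajFrom T t hbar B ℓ x (0:ℕ→U) (k+1))‖ * ‖xtrajFrom T t hbar B ℓ x (0:ℕ→U) (k+1)‖ :=
            real_inner_le_norm _ _
        _ ≤ ‖Q (ℓ+k+1)‖ * ‖xtrajFrom T t hbar B ℓ x (0:ℕ→U) (k+1)‖ * ‖xtrajFrom T t hbar B ℓ x (0:ℕ→U) (k+1)‖ := by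
            apply mul_le_mul_of_nonneg_right (ContinuousLinearMap.le_opNorm _ _) (norm_nonneg _)
        _ ≤ ‖Q (ℓ+k+1)‖ * (‖T (t (ℓ + k + 1) - t (ℓ + k))‖ * D * ‖x‖) * (‖T (t (ℓ + k + 1) - t (ℓ + k))‖ * D * ‖x‖) := by
            apply mul_le_mul
            · apply mul_le_mul_of_nonneg_left hY (norm_nonneg _)
            · exact hY
            · exact norm_nonneg _
            · positivity
        _ = ‖Q (ℓ + k + 1)‖ * (‖T (t (ℓ + k + 1) - t (ℓ + k))‖ * D) ^ 2 * ‖x‖ ^ 2 := by ring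
    rw [hsum]
    have := hC x
    nlinarith [this, hstage]

include hQsym hRsym hQ0 hR0 in
lemma Wk_continuous (ℓ k : ℕ) : Continuous (Wk T t hbar B Q R ℓ k) := by
  obtain ⟨C, hC0, hC⟩ := PS_zero_ctrl_bound T t hbar B Q R ℓ k
  -- sqrt Wk is Lipschitz with constant sqrt C
  have key : ∀ x y : H, Real.sqrt (Wk T t hbar B Q R ℓ k x)
      ≤ Real.sqrt (Wk T t hbar B Q R ℓ k y) + Real.sqrt C * ‖x - y‖ := by
    intro x y
    have hWx0 := Wk_nonneg T t hbar B Q R hQ0 hR0 ℓ k x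
    have hWy0 := Wk_nonneg T t hbar B Q R hQ0 hR0 ℓ k y
    -- for every ε > 0
    have hmain : ∀ ε : ℝ, 0 < ε → Real.sqrt (Wk T t hbar B Q R ℓ k x)
        ≤ Real.sqrt (Wk T t hbar B Q R ℓ k y + ε) + Real.sqrt C * ‖x - y‖ := by
      intro ε hε
      obtain ⟨v, hv⟩ := exists_PS_lt T t hbar B Q R ℓ k y hε
      have hWle : Wk T t hbar B Q R ℓ k x ≤ PS T t hbar B Q R ℓ k x v :=
        Wk_le_PS T t hbar B Q R hQ0 hR0 ℓ k x v
      have hxv : PS T t hbar B Q R ℓ k x v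
          ≤ (Real.sqrt (PS T t hbar B Q R ℓ k y v) + Real.sqrt (PS T t hbar B Q R ℓ k (x - y) 0)) ^ 2 := by
        have := PS_sqrt_subadd T t hbar B Q R hQsym hRsym hQ0 hR0 ℓ k y v (x - y) 0
        have e1 : y + (x - y) = x := by abel
        have e2 : v + (0 : ℕ → U) = v := by funext j; simp
        rw [e1, e2] at this
        exact this
      have hPSbd : PS T t hbar B Q R ℓ k (x - y) 0 ≤ C * ‖x - y‖ ^ 2 := hC (x - y)
      have hs1 : Real.sqrt (PS T t hbar B Q R ℓ k y v) ≤ Real.sqrt (Wk T t hbar B Q R ℓ k y + ε) :=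
        Real.sqrt_le_sqrt (le_of_lt hv)
      have hs2 : Real.sqrt (PS T t hbar B Q R ℓ k (x - y) 0) ≤ Real.sqrt C * ‖x - y‖ := by
        calc Real.sqrt (PS T t hbar B Q R ℓ k (x - y) 0) ≤ Real.sqrt (C * ‖x - y‖ ^ 2) :=
              Real.sqrt_le_sqrt hPSbd
          _ = Real.sqrt C * ‖x - y‖ := by
              rw [Real.sqrt_mul hC0, Real.sqrt_sq (norm_nonneg _)]
      have h4 : Real.sqrt (Wk T t hbar B Q R ℓ k x) ≤ Real.sqrt (PS T t hbar B Q R ℓ k x v) :=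
        Real.sqrt_le_sqrt hWle
      have h5 : Real.sqrt (PS T t hbar B Q R ℓ k x v)
          ≤ Real.sqrt (PS T t hbar B Q R ℓ k y v) + Real.sqrt (PS T t hbar B Q R ℓ k (x - y) 0) := by
        have hnn : 0 ≤ Real.sqrt (PS T t hbar B Q R ℓ k y v) + Real.sqrt (PS T t hbar B Q R ℓ k (x - y) 0) := by
          positivity
        calc Real.sqrt (PS T t hbar B Q R ℓ k x v) ≤ Real.sqrt ((Real.sqrt (PS T t hbar B Q R ℓ k y v) + Real.sqrt (PS T t hbar B Q R ℓ k (x - y) 0)) ^ 2) :=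
              Real.sqrt_le_sqrt hxv
          _ = _ := by rw [Real.sqrt_sq hnn]
      linarith
    -- pass to the limit ε → 0
    by_contra hcon
    push_neg at hcon
    set d := Real.sqrt (Wk T t hbar B Q R ℓ k x)
      - (Real.sqrt (Wk T t hbar B Q R ℓ k y) + Real.sqrt C * ‖x - y‖) with hd
    have hd0 : 0 < d := by rw [hd]; linarith
    -- sqrt (W + ε) ≤ sqrt W + sqrt ε
    have hsplit : ∀ ε : ℝ, 0 < ε → Real.sqrt (Wk T t hbar B Q R ℓ k y + ε)
        ≤ Real.sqrt (Wk T t hbar B Q R ℓ k y) + Real.sqrt ε := by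
      intro ε hε
      have h1 : Wk T t hbar B Q R ℓ k y + ε
          ≤ (Real.sqrt (Wk T t hbar B Q R ℓ k y) + Real.sqrt ε) ^ 2 := by
        have := Real.sq_sqrt hWy0
        have h2 := Real.sq_sqrt (le_of_lt hε)
        nlinarith [Real.sqrt_nonneg (Wk T t hbar B Q R ℓ k y), Real.sqrt_nonneg ε]
      calc Real.sqrt (Wk T t hbar B Q R ℓ k y + ε)
          ≤ Real.sqrt ((Real.sqrt (Wk T t hbar B Q R ℓ k y) + Real.sqrt ε) ^ 2) :=
            Real.sqrt_le_sqrt h1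
        _ = _ := Real.sqrt_sq (by positivity)
    have := hmain (d ^ 2 / 4) (by positivity)
    have h6 := hsplit (d ^ 2 / 4) (by positivity)
    have h7 : Real.sqrt (d ^ 2 / 4) = d / 2 := by
      rw [show d ^ 2 / 4 = (d / 2) ^ 2 by ring, Real.sqrt_sq (by linarith)]
    rw [h7] at h6
    linarith
  have hlip : LipschitzWith (Real.toNNReal (Real.sqrt C))
      (fun x => Real.sqrt (Wk T t hbar B Q R ℓ k x)) := by
    apply LipschitzWith.of_dist_le_mul
    intro x y
    rw [Real.dist_eq, Real.coe_toNNReal _ (Real.sqrt_nonneg C)]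
    have h1 := key x y
    have h2 := key y x
    rw [abs_le]
    constructor
    · have : ‖y - x‖ = dist x y := by rw [dist_eq_norm, norm_sub_rev]
      rw [← this]; linarith
    · have : ‖x - y‖ = dist x y := by rw [dist_eq_norm]
      rw [← this]; linarith
  have hW : Wk T t hbar B Q R ℓ k = fun x => (Real.sqrt (Wk T t hbar B Q R ℓ k x)) ^ 2 := by
    funext x
    rw [Real.sq_sqrt (Wk_nonneg T t hbar B Q R hQ0 hR0 ℓ k x)]
  rw [hW]
  exact (hlip.continuous).pow 2

end Proof3

section Proof4
set_option linter.unusedSectionVars false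

variable {H U : Type*} [NormedAddCommGroup H] [InnerProductSpace ℝ H] [CompleteSpace H]
  [NormedAddCommGroup U] [InnerProductSpace ℝ U] [CompleteSpace U]
  (T : ℝ → H →L[ℝ] H) (t : ℕ → ℝ) (hbar : ℕ) (B : ℕ → U →L[ℝ] H)
  (Q : ℕ → H →L[ℝ] H) (R : ℕ → U →L[ℝ] U)

variable (hQsym : ∀ j, 1 ≤ j → ∀ v w : H, ⟪Q j v, w⟫ = ⟪v, Q j w⟫)
  (hRsym : ∀ j, 1 ≤ j → ∀ v w : U, ⟪R j v, w⟫ = ⟪v, R j w⟫)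
  (hQ0 : ∀ j, 1 ≤ j → ∀ v : H, 0 ≤ ⟪Q j v, v⟫)
  (hR0 : ∀ j, 1 ≤ j → ∀ v : U, 0 ≤ ⟪R j v, v⟫)

lemma periodic_reduce {α : Sort*} {hbar : ℕ} (hh : 0 < hbar) (f : ℕ → α)
    (hf : ∀ j, 1 ≤ j → f (j + hbar) = f j) :
    ∀ j, 1 ≤ j → ∃ i, 1 ≤ i ∧ i ≤ hbar ∧ f j = f i := by
  intro j
  induction j using Nat.strong_induction_on with
  | _ j ih =>
    intro hj
    by_cases h : j ≤ hbar
    · exact ⟨j, hj, h, rfl⟩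
    · push_neg at h
      have h1 : 1 ≤ j - hbar := by omega
      have h2 : j - hbar + hbar = j := by omega
      have h3 : f j = f (j - hbar) := by
        have := hf (j - hbar) h1
        rw [h2] at this
        exact this.symm ▸ this
      obtain ⟨i, hi1, hi2, hi3⟩ := ih (j - hbar) (by omega) h1
      exact ⟨i, hi1, hi2, h3.trans hi3⟩

lemma exists_opnorm_bound {E : Type*} [NormedAddCommGroup E] [NormedSpace ℝ E]
    {hbar : ℕ} (hh : 0 < hbar) (S : ℕ → E →L[ℝ] E)
    (hS : ∀ j, 1 ≤ j → S (j + hbar) = S j) :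
    ∃ C : ℝ, 0 ≤ C ∧ ∀ j, 1 ≤ j → ‖S j‖ ≤ C := by
  refine ⟨∑ i ∈ Finset.Icc 1 hbar, ‖S i‖, Finset.sum_nonneg fun _ _ => norm_nonneg _,
    fun j hj => ?_⟩
  obtain ⟨i, hi1, hi2, hi3⟩ := periodic_reduce hh S hS j hj
  rw [hi3]
  exact Finset.single_le_sum (fun _ _ => norm_nonneg _) (Finset.mem_Icc.2 ⟨hi1, hi2⟩)

lemma exists_uniform_delta {hbar : ℕ} (hh : 0 < hbar)
    (hQ : MemMCoercive hbar Q) (hR : MemMCoercive hbar R) :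
    ∃ δ : ℝ, 0 < δ ∧ ∀ j, 1 ≤ j →
      (∀ v : H, δ * ‖v‖ ^ 2 ≤ ⟪Q j v, v⟫) ∧ (∀ w : U, δ * ‖w‖ ^ 2 ≤ ⟪R j w, w⟫) := by
  classical
  have hpair : ∀ j, 1 ≤ j → (fun j => (Q j, R j)) (j + hbar) = (fun j => (Q j, R j)) j := by
    intro j hj
    simp only [hQ.2 j hj, hR.2 j hj]
  set d : ℕ → ℝ := fun i =>
    if h : 1 ≤ i ∧ i ≤ hbar then
      min (hQ.1 i h.1).2.choose (hR.1 i h.1).2.choose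
    else 1 with hd
  have hne : (Finset.Icc 1 hbar).Nonempty := ⟨1, Finset.mem_Icc.2 ⟨le_refl _, hh⟩⟩
  set δ := (Finset.Icc 1 hbar).inf' hne d with hδ
  have hdpos : ∀ i ∈ Finset.Icc 1 hbar, 0 < d i := by
    intro i hi
    rw [Finset.mem_Icc] at hi
    simp only [hd, dif_pos hi]
    exact lt_min (hQ.1 i hi.1).2.choose_spec.1 (hR.1 i hi.1).2.choose_spec.1
  have hδpos : 0 < δ := by
    rw [hδ, Finset.lt_inf'_iff]
    exact fun i hi => hdpos i hi
  refine ⟨δ, hδpos, fun j hj => ?_⟩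
  obtain ⟨i, hi1, hi2, hi3⟩ := periodic_reduce hh (fun j => (Q j, R j)) hpair j hj
  have hQeq : Q j = Q i := congrArg Prod.fst hi3
  have hReq : R j = R i := congrArg Prod.snd hi3
  have hmem : i ∈ Finset.Icc 1 hbar := Finset.mem_Icc.2 ⟨hi1, hi2⟩
  have hδle : δ ≤ d i := Finset.inf'_le d hmem
  have hdi : d i = min (hQ.1 i hi1).2.choose (hR.1 i hi1).2.choose := by
    simp only [hd, dif_pos (And.intro hi1 hi2)]
  constructor
  · intro v
    rw [hQeq]
    calc δ * ‖v‖ ^ 2 ≤ (hQ.1 i hi1).2.choose * ‖v‖ ^ 2 := by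
          apply mul_le_mul_of_nonneg_right _ (sq_nonneg _)
          have := min_le_left (hQ.1 i hi1).2.choose (hR.1 i hi1).2.choose
          rw [← hdi] at this
          linarith
      _ ≤ ⟪Q i v, v⟫ := (hQ.1 i hi1).2.choose_spec.2 v
  · intro w
    rw [hReq]
    calc δ * ‖w‖ ^ 2 ≤ (hR.1 i hi1).2.choose * ‖w‖ ^ 2 := by
          apply mul_le_mul_of_nonneg_right _ (sq_nonneg _)
          have := min_le_right (hQ.1 i hi1).2.choose (hR.1 i hi1).2.choose
          rw [← hdi] at this
          linarith
      _ ≤ ⟪R i w, w⟫ := (hR.1 i hi1).2.choose_spec.2 w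

lemma Jinf_eq_tsum_stage (ℓ : ℕ) (x : H) (u : ℕ → U) :
    Jinf T t hbar B Q R ℓ x u = ∑' m, stage T t hbar B Q R ℓ m x u := rfl

include hQ0 hR0 in
lemma Jinf_nonneg (ℓ : ℕ) (x : H) (u : ℕ → U) :
    0 ≤ Jinf T t hbar B Q R ℓ x u := by
  rw [Jinf_eq_tsum_stage]
  exact tsum_nonneg fun m => stage_nonneg T t hbar B Q R hQ0 hR0 ℓ m x u

include hQ0 hR0 in
lemma stage_summable {CQ CR : ℝ}
    (hQb : ∀ j, 1 ≤ j → ‖Q j‖ ≤ CQ) (hRb : ∀ j, 1 ≤ j → ‖R j‖ ≤ CR)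
    (ℓ : ℕ) (x : H) (u : ℕ → U) (hu : u ∈ UadFrom T t hbar B ℓ x) :
    Summable (fun m => stage T t hbar B Q R ℓ m x u) := by
  obtain ⟨hu1, hu2⟩ := hu
  refine Summable.of_nonneg_of_le
    (fun m => stage_nonneg T t hbar B Q R hQ0 hR0 ℓ m x u)
    (fun m => ?_) (((hu2.mul_left CQ).add (hu1.mul_left CR)))
  unfold stage
  have hQm : ⟪Q (ℓ+m+1) (xtrajFrom T t hbar B ℓ x u (m+1)), xtrajFrom T t hbar B ℓ x u (m+1)⟫
      ≤ CQ * ‖xtrajFrom T t hbar B ℓ x u (m+1)‖ ^ 2 := by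
    calc ⟪Q (ℓ+m+1) (xtrajFrom T t hbar B ℓ x u (m+1)), xtrajFrom T t hbar B ℓ x u (m+1)⟫
        ≤ ‖Q (ℓ+m+1) (xtrajFrom T t hbar B ℓ x u (m+1))‖ * ‖xtrajFrom T t hbar B ℓ x u (m+1)‖ :=
          real_inner_le_norm _ _
      _ ≤ ‖Q (ℓ+m+1)‖ * ‖xtrajFrom T t hbar B ℓ x u (m+1)‖ * ‖xtrajFrom T t hbar B ℓ x u (m+1)‖ :=
          mul_le_mul_of_nonneg_right (ContinuousLinearMap.le_opNorm _ _) (norm_nonneg _)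
      _ ≤ CQ * ‖xtrajFrom T t hbar B ℓ x u (m+1)‖ ^ 2 := by
          have := hQb (ℓ+m+1) (by omega)
          nlinarith [norm_nonneg (xtrajFrom T t hbar B ℓ x u (m+1)), this]
  have hRm : ⟪R (ℓ+m+1) (u (ℓ+m+1)), u (ℓ+m+1)⟫ ≤ CR * ‖u (ℓ+m+1)‖ ^ 2 := by
    calc ⟪R (ℓ+m+1) (u (ℓ+m+1)), u (ℓ+m+1)⟫
        ≤ ‖R (ℓ+m+1) (u (ℓ+m+1))‖ * ‖u (ℓ+m+1)‖ := real_inner_le_norm _ _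
      _ ≤ ‖R (ℓ+m+1)‖ * ‖u (ℓ+m+1)‖ * ‖u (ℓ+m+1)‖ :=
          mul_le_mul_of_nonneg_right (ContinuousLinearMap.le_opNorm _ _) (norm_nonneg _)
      _ ≤ CR * ‖u (ℓ+m+1)‖ ^ 2 := by
          have := hRb (ℓ+m+1) (by omega)
          nlinarith [norm_nonneg (u (ℓ+m+1)), this]
  exact add_le_add hQm hRm

include hQ0 hR0 in
lemma Wk_le_Jinf {CQ CR : ℝ}
    (hQb : ∀ j, 1 ≤ j → ‖Q j‖ ≤ CQ) (hRb : ∀ j, 1 ≤ j → ‖R j‖ ≤ CR)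
    (ℓ k : ℕ) (x : H) (u : ℕ → U) (hu : u ∈ UadFrom T t hbar B ℓ x) :
    Wk T t hbar B Q R ℓ k x ≤ Jinf T t hbar B Q R ℓ x u := by
  refine le_trans (Wk_le_PS T t hbar B Q R hQ0 hR0 ℓ k x u) ?_
  rw [Jinf_eq_tsum_stage]
  exact Summable.sum_le_tsum (Finset.range k)
    (fun m _ => stage_nonneg T t hbar B Q R hQ0 hR0 ℓ m x u)
    (stage_summable T t hbar B Q R hQ0 hR0 hQb hRb ℓ x u hu)

include hQsym hRsym hQ0 hR0 in
lemma Wk_quad_bound {CQ CR : ℝ}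
    (hQb : ∀ j, 1 ≤ j → ‖Q j‖ ≤ CQ) (hRb : ∀ j, 1 ≤ j → ‖R j‖ ≤ CR)
    (ℓ : ℕ) (hAdl : ∀ x : H, (UadFrom T t hbar B ℓ x).Nonempty) :
    ∃ C : ℝ, 0 ≤ C ∧ ∀ k (x : H), Wk T t hbar B Q R ℓ k x ≤ C * ‖x‖ ^ 2 := by
  set E : ℕ → Set H := fun n => {x | ∀ k, Wk T t hbar B Q R ℓ k x ≤ n} with hE
  have hclosed : ∀ n, IsClosed (E n) := by
    intro n
    have : E n = ⋂ k, (Wk T t hbar B Q R ℓ k) ⁻¹' (Set.Iic (n : ℝ)) := by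
      ext x; simp [hE, Set.mem_iInter]
    rw [this]
    exact isClosed_iInter fun k =>
      (isClosed_Iic).preimage (Wk_continuous T t hbar B Q R hQsym hRsym hQ0 hR0 ℓ k)
  have hcover : ⋃ n, E n = Set.univ := by
    rw [Set.eq_univ_iff_forall]
    intro x
    obtain ⟨u, hu⟩ := hAdl x
    have hb : ∀ k, Wk T t hbar B Q R ℓ k x ≤ Jinf T t hbar B Q R ℓ x u :=
      fun k => Wk_le_Jinf T t hbar B Q R hQ0 hR0 hQb hRb ℓ k x u hu
    refine Set.mem_iUnion.2 ⟨⌈Jinf T t hbar B Q R ℓ x u⌉₊, fun k => ?_⟩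
    calc Wk T t hbar B Q R ℓ k x ≤ Jinf T t hbar B Q R ℓ x u := hb k
      _ ≤ ⌈Jinf T t hbar B Q R ℓ x u⌉₊ := Nat.le_ceil _
  obtain ⟨n, hn⟩ := nonempty_interior_of_iUnion_of_closed hclosed hcover
  obtain ⟨x0, hx0⟩ := hn
  rw [mem_interior_iff_mem_nhds, Metric.mem_nhds_iff] at hx0
  obtain ⟨r, hr, hball⟩ := hx0
  have hsmall : ∀ y : H, ‖y‖ < r → ∀ k, Wk T t hbar B Q R ℓ k y ≤ n := by
    intro y hy k
    have h1 : x0 + y ∈ E n := hball (by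
      rw [Metric.mem_ball, dist_eq_norm, add_sub_cancel_left]; exact hy)
    have h2 : x0 - y ∈ E n := hball (by
      rw [Metric.mem_ball, dist_eq_norm]
      have : x0 - y - x0 = -y := by abel
      rw [this, norm_neg]; exact hy)
    have hpar := Wk_par T t hbar B Q R hQsym hRsym hQ0 hR0 ℓ k x0 y
    have h3 := h1 k
    have h4 := h2 k
    have h5 := Wk_nonneg T t hbar B Q R hQ0 hR0 ℓ k x0
    linarith
  refine ⟨4 * n / r ^ 2, by positivity, fun k x => ?_⟩
  rcases eq_or_ne x 0 with rfl | hx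
  · rw [Wk_zero T t hbar B Q R hQ0 hR0]
    simp
  · have hxn : (0:ℝ) < ‖x‖ := norm_pos_iff.2 hx
    set y := (r / (2 * ‖x‖)) • x with hy
    have hyn : ‖y‖ < r := by
      rw [hy, norm_smul, Real.norm_eq_abs, abs_of_pos (by positivity)]
      rw [div_mul_eq_mul_div, mul_comm]
      rw [div_lt_iff₀ (by positivity)]
      nlinarith [hxn, hr]
    have hxy : x = ((2 * ‖x‖) / r) • y := by
      rw [hy, smul_smul]
      rw [show (2 * ‖x‖) / r * (r / (2 * ‖x‖)) = 1 by field_simp]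
      rw [one_smul]
    have := hsmall y hyn k
    calc Wk T t hbar B Q R ℓ k x = ((2 * ‖x‖) / r) ^ 2 * Wk T t hbar B Q R ℓ k y := by
          rw [← Wk_smul T t hbar B Q R hQsym hRsym hQ0 hR0 ℓ k, ← hxy]
      _ ≤ ((2 * ‖x‖) / r) ^ 2 * n := by
          apply mul_le_mul_of_nonneg_left this (by positivity)
      _ = 4 * n / r ^ 2 * ‖x‖ ^ 2 := by field_simp; ring

end Proof4

section Proof5
set_option linter.unusedSectionVars false

variable {H U : Type*} [NormedAddCommGroup H] [InnerProductSpace ℝ H] [CompleteSpace H]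
  [NormedAddCommGroup U] [InnerProductSpace ℝ U] [CompleteSpace U]
  (T : ℝ → H →L[ℝ] H) (t : ℕ → ℝ) (hbar : ℕ) (B : ℕ → U →L[ℝ] H)

lemma t_shift (htper : ∀ j : ℕ, t (j + hbar) = t j + t hbar) :
    ∀ c j, t (j + hbar * c) = t j + c * t hbar := by
  intro c
  induction c with
  | zero => simp
  | succ c ih =>
    intro j
    have : j + hbar * (c + 1) = (j + hbar * c) + hbar := by ring
    rw [this, htper, ih]
    push_cast
    ring

lemma xplusFrom_congr_ctrl (ℓ : ℕ) (x : H) (u v : ℕ → U) :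
    ∀ m, (∀ j, ℓ + 1 ≤ j → j ≤ ℓ + m → u j = v j) →
      xplusFrom T t hbar B ℓ x u m = xplusFrom T t hbar B ℓ x v m := by
  intro m
  induction m with
  | zero => intro _; rfl
  | succ m ih =>
    intro h
    have h1 : xplusFrom T t hbar B ℓ x u m = xplusFrom T t hbar B ℓ x v m :=
      ih fun j hj1 hj2 => h j hj1 (by omega)
    simp only [xplusFrom, h1, h (ℓ + m + 1) (by omega) (by omega)]

lemma nu_shift {N : ℕ} (hN : hbar ∣ N) (j : ℕ) : nu hbar (N + j) = nu hbar j := by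
  unfold nu
  obtain ⟨c, rfl⟩ := hN
  rw [show hbar * c + j = j + c * hbar by ring, Nat.add_mul_mod_self_right]

/-- shifting a trajectory started at a multiple of `hbar` -/
lemma xplusFrom_shift (htper : ∀ j : ℕ, t (j + hbar) = t j + t hbar)
    (ℓ d : ℕ) (hd : hbar ∣ (ℓ + d)) (x : H) (u w : ℕ → U)
    (hu : ∀ m : ℕ, u (ℓ + d + m + 1) = w (m + 1)) :
    ∀ m, xplusFrom T t hbar B ℓ x u (d + m)
      = xplusFrom T t hbar B 0 (xplusFrom T t hbar B ℓ x u d) w m := by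
  obtain ⟨c, hc⟩ := hd
  have hgap : ∀ m : ℕ, t (ℓ + (d + m) + 1) - t (ℓ + (d + m)) = t (0 + m + 1) - t (0 + m) := by
    intro m
    have e1 : ℓ + (d + m) + 1 = (m + 1) + hbar * c := by omega
    have e2 : ℓ + (d + m) = m + hbar * c := by omega
    rw [e1, e2, t_shift t hbar htper, t_shift t hbar htper]
    simp only [Nat.zero_add]
    ring
  have hnu : ∀ m : ℕ, nu hbar (ℓ + (d + m) + 1) = nu hbar (0 + m + 1) := by
    intro m
    have e1 : ℓ + (d + m) + 1 = (ℓ + d) + (m + 1) := by omega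
    rw [e1, nu_shift hbar ⟨c, hc⟩]
    simp only [Nat.zero_add]
  intro m
  induction m with
  | zero => rfl
  | succ m ih =>
    have e : d + (m + 1) = (d + m) + 1 := by omega
    rw [e]
    show T (t (ℓ + (d + m) + 1) - t (ℓ + (d + m))) (xplusFrom T t hbar B ℓ x u (d + m))
        + B (nu hbar (ℓ + (d + m) + 1)) (u (ℓ + (d + m) + 1)) = _
    rw [hgap m, hnu m, ih]
    have hu' : u (ℓ + (d + m) + 1) = w (0 + m + 1) :=
      (show ℓ + (d + m) + 1 = ℓ + d + m + 1 by omega) ▸ (hu m).trans (by rw [Nat.zero_add])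
    rw [hu']
    rfl


lemma Uad_shift_nonempty (hhbar : 0 < hbar)
    (htper : ∀ j : ℕ, t (j + hbar) = t j + t hbar)
    (hAd : ∀ x0 : H, (UadFrom T t hbar B 0 x0).Nonempty) (ℓ : ℕ) (x : H) :
    (UadFrom T t hbar B ℓ x).Nonempty := by
  classical
  set N := hbar * (ℓ + 1) with hN
  have hNl : ℓ < N := by
    calc ℓ < ℓ + 1 := by omega
      _ ≤ hbar * (ℓ + 1) := Nat.le_mul_of_pos_left _ hhbar
  set d := N - ℓ with hdd
  have hNd : ℓ + d = N := by omega
  set z := xplusFrom T t hbar B ℓ x (0 : ℕ → U) d with hz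
  obtain ⟨w, hw1, hw2⟩ := hAd z
  set u : ℕ → U := fun i => if ℓ + d < i then w (i - (ℓ + d)) else 0 with hu
  have hu0 : ∀ j, ℓ + 1 ≤ j → j ≤ ℓ + d → u j = (0 : ℕ → U) j := by
    intro j _ hj2
    simp only [hu]
    rw [if_neg (by omega)]
    rfl
  have hbase : xplusFrom T t hbar B ℓ x u d = z := by
    rw [hz]
    exact xplusFrom_congr_ctrl T t hbar B ℓ x u 0 d hu0
  have hushift : ∀ m : ℕ, u (ℓ + d + m + 1) = w (m + 1) := by
    intro m
    simp only [hu]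
    rw [if_pos (by omega)]
    congr 1
    omega
  have hdvd : hbar ∣ (ℓ + d) := by rw [hNd, hN]; exact ⟨ℓ + 1, rfl⟩
  have hshift := xplusFrom_shift T t hbar B htper ℓ d hdvd x u w hushift
  have htrajshift : ∀ m : ℕ, xtrajFrom T t hbar B ℓ x u (d + m + 1)
      = xtrajFrom T t hbar B 0 z w (m + 1) := by
    intro m
    show T (t (ℓ + (d + m) + 1) - t (ℓ + (d + m))) (xplusFrom T t hbar B ℓ x u (d + m)) = _
    have hgap : t (ℓ + (d + m) + 1) - t (ℓ + (d + m)) = t (0 + m + 1) - t (0 + m) := by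
      obtain ⟨c, hc⟩ := hdvd
      have e1 : ℓ + (d + m) + 1 = (m + 1) + hbar * c := by omega
      have e2 : ℓ + (d + m) = m + hbar * c := by omega
      rw [e1, e2, t_shift t hbar htper, t_shift t hbar htper]
      simp only [Nat.zero_add]
      ring
    rw [hgap, hshift m, ← hbase]
    rfl
  refine ⟨u, ?_, ?_⟩
  · -- summability of the control
    rw [← summable_nat_add_iff d]
    have heq : ∀ j : ℕ, ‖u (ℓ + (j + d) + 1)‖ ^ 2 = ‖w (0 + j + 1)‖ ^ 2 := by
      intro j
      have : ℓ + (j + d) + 1 = ℓ + d + j + 1 := by omega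
      rw [this, hushift j, Nat.zero_add]
    exact (summable_congr fun j => (heq j).symm).mp hw1
  · -- summability of the trajectory
    rw [← summable_nat_add_iff d]
    have heq : ∀ j : ℕ, ‖xtrajFrom T t hbar B ℓ x u (j + d + 1)‖ ^ 2
        = ‖xtrajFrom T t hbar B 0 z w (j + 1)‖ ^ 2 := by
      intro j
      rw [show j + d + 1 = d + j + 1 by omega, htrajshift j]
    exact (summable_congr fun j => (heq j).symm).mp hw2

end Proof5

section Proof6
set_option linter.unusedSectionVars false

open Filter Topology

variable {H U : Type*} [NormedAddCommGroup H] [InnerProductSpace ℝ H] [CompleteSpace H]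
  [NormedAddCommGroup U] [InnerProductSpace ℝ U] [CompleteSpace U]
  (T : ℝ → H →L[ℝ] H) (t : ℕ → ℝ) (hbar : ℕ) (B : ℕ → U →L[ℝ] H)
  (Q : ℕ → H →L[ℝ] H) (R : ℕ → U →L[ℝ] U)

variable (hQsym : ∀ j, 1 ≤ j → ∀ v w : H, ⟪Q j v, w⟫ = ⟪v, Q j w⟫)
  (hRsym : ∀ j, 1 ≤ j → ∀ v w : U, ⟪R j v, w⟫ = ⟪v, R j w⟫)
  (hQ0 : ∀ j, 1 ≤ j → ∀ v : H, 0 ≤ ⟪Q j v, v⟫)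
  (hR0 : ∀ j, 1 ≤ j → ∀ v : U, 0 ≤ ⟪R j v, v⟫)

include hQ0 hR0 in
lemma PS_ctrl_lower {δ : ℝ}
    (hδR : ∀ j, 1 ≤ j → ∀ w : U, δ * ‖w‖ ^ 2 ≤ ⟪R j w, w⟫)
    (ℓ k : ℕ) (x : H) (u : ℕ → U) :
    δ * ∑ j ∈ Finset.range k, ‖u (ℓ + j + 1)‖ ^ 2 ≤ PS T t hbar B Q R ℓ k x u := by
  rw [Finset.mul_sum]
  refine Finset.sum_le_sum fun j _ => ?_
  unfold stage
  have h1 := hδR (ℓ + j + 1) (by omega) (u (ℓ + j + 1))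
  have h2 := hQ0 (ℓ + j + 1) (by omega) (xtrajFrom T t hbar B ℓ x u (j + 1))
  linarith

include hQ0 hR0 in
lemma PS_traj_lower {δ : ℝ}
    (hδQ : ∀ j, 1 ≤ j → ∀ v : H, δ * ‖v‖ ^ 2 ≤ ⟪Q j v, v⟫)
    (ℓ k : ℕ) (x : H) (u : ℕ → U) :
    δ * ∑ j ∈ Finset.range k, ‖xtrajFrom T t hbar B ℓ x u (j + 1)‖ ^ 2
      ≤ PS T t hbar B Q R ℓ k x u := by
  rw [Finset.mul_sum]
  refine Finset.sum_le_sum fun j _ => ?_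
  unfold stage
  have h1 := hδQ (ℓ + j + 1) (by omega) (xtrajFrom T t hbar B ℓ x u (j + 1))
  have h2 := hR0 (ℓ + j + 1) (by omega) (u (ℓ + j + 1))
  linarith

include hQsym hRsym hQ0 hR0 in
lemma Vinf_eq_iSup_Wk {CQ CR δ : ℝ}
    (hQb : ∀ j, 1 ≤ j → ‖Q j‖ ≤ CQ) (hRb : ∀ j, 1 ≤ j → ‖R j‖ ≤ CR)
    (hδ : 0 < δ)
    (hδQ : ∀ j, 1 ≤ j → ∀ v : H, δ * ‖v‖ ^ 2 ≤ ⟪Q j v, v⟫)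
    (hδR : ∀ j, 1 ≤ j → ∀ w : U, δ * ‖w‖ ^ 2 ≤ ⟪R j w, w⟫)
    (ℓ : ℕ) (hAdl : ∀ y : H, (UadFrom T t hbar B ℓ y).Nonempty) (x : H) :
    Vinf T t hbar B Q R ℓ x = ⨆ k, Wk T t hbar B Q R ℓ k x := by
  classical
  obtain ⟨u₀, hu₀⟩ := hAdl x
  have hbdd : BddAbove (Set.range fun k => Wk T t hbar B Q R ℓ k x) := by
    refine ⟨Jinf T t hbar B Q R ℓ x u₀, ?_⟩
    rintro _ ⟨k, rfl⟩
    exact Wk_le_Jinf T t hbar B Q R hQ0 hR0 hQb hRb ℓ k x u₀ hu₀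
  set L := ⨆ k, Wk T t hbar B Q R ℓ k x with hL
  have hWkL : ∀ k, Wk T t hbar B Q R ℓ k x ≤ L := fun k => le_ciSup hbdd k
  have hmono : Monotone (fun k => Wk T t hbar B Q R ℓ k x) :=
    fun a b hab => Wk_mono T t hbar B Q R hQ0 hR0 ℓ hab x
  have htend : Tendsto (fun k => Wk T t hbar B Q R ℓ k x) atTop (𝓝 L) :=
    tendsto_atTop_ciSup hmono hbdd
  have hSne : {c : ℝ | ∃ u ∈ UadFrom T t hbar B ℓ x, c = Jinf T t hbar B Q R ℓ x u}.Nonempty :=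
    ⟨Jinf T t hbar B Q R ℓ x u₀, u₀, hu₀, rfl⟩
  have hSbdd : BddBelow {c : ℝ | ∃ u ∈ UadFrom T t hbar B ℓ x, c = Jinf T t hbar B Q R ℓ x u} := by
    refine ⟨0, ?_⟩
    rintro c ⟨u, hu, rfl⟩
    exact Jinf_nonneg T t hbar B Q R hQ0 hR0 ℓ x u
  refine le_antisymm ?_ ?_
  · -- Vinf ≤ L : construct a near-optimal admissible control
    have hchoice : ∀ k : ℕ, ∃ u : ℕ → U,
        PS T t hbar B Q R ℓ k x u < Wk T t hbar B Q R ℓ k x + 1 / (k + 1) :=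
      fun k => exists_PS_lt T t hbar B Q R ℓ k x (by positivity)
    choose uu huu using hchoice
    -- strong convexity estimate
    have key : ∀ k m : ℕ, k ≤ m →
        δ * ∑ j ∈ Finset.range k, ‖uu m (ℓ + j + 1) - uu k (ℓ + j + 1)‖ ^ 2
          ≤ 2 * (L - Wk T t hbar B Q R ℓ k x) + 2 * (1 / (k + 1)) + 2 * (1 / (m + 1)) := by
      intro k m hkm
      have hpar := PS_par T t hbar B Q R hQsym hRsym ℓ k x (uu m) x (uu k)
      have hxx : x - x = (0 : H) := by abel
      rw [hxx] at hpar
      have hmid : PS T t hbar B Q R ℓ k (x + x) (uu m + uu k)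
          = 4 * PS T t hbar B Q R ℓ k x ((1/2 : ℝ) • (uu m + uu k)) := by
        have := PS_smul T t hbar B Q R hQsym hRsym ℓ k 2 x ((1/2 : ℝ) • (uu m + uu k))
        have e1 : (2:ℝ) • x = x + x := two_smul ℝ x
        have e2 : (2:ℝ) • ((1/2 : ℝ) • (uu m + uu k)) = uu m + uu k := by
          rw [smul_smul]; norm_num
        rw [e1, e2] at this
        rw [this]; norm_num
      have hlow := PS_ctrl_lower T t hbar B Q R hQ0 hR0 hδR ℓ k 0 (uu m - uu k)
      have hsub : ∀ j : ℕ, (uu m - uu k) (ℓ + j + 1) = uu m (ℓ + j + 1) - uu k (ℓ + j + 1) :=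
        fun j => rfl
      have hlow' : δ * ∑ j ∈ Finset.range k, ‖uu m (ℓ + j + 1) - uu k (ℓ + j + 1)‖ ^ 2
          ≤ PS T t hbar B Q R ℓ k 0 (uu m - uu k) := by
        have : ∀ j ∈ Finset.range k, ‖uu m (ℓ + j + 1) - uu k (ℓ + j + 1)‖ ^ 2
            = ‖(uu m - uu k) (ℓ + j + 1)‖ ^ 2 := fun j _ => by rw [hsub]
        rw [Finset.sum_congr rfl this]
        exact hlow
      have hmidW : Wk T t hbar B Q R ℓ k x
          ≤ PS T t hbar B Q R ℓ k x ((1/2 : ℝ) • (uu m + uu k)) :=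
        Wk_le_PS T t hbar B Q R hQ0 hR0 ℓ k x _
      have hum : PS T t hbar B Q R ℓ k x (uu m) ≤ PS T t hbar B Q R ℓ m x (uu m) :=
        PS_mono_k T t hbar B Q R hQ0 hR0 ℓ hkm x (uu m)
      have hum2 : PS T t hbar B Q R ℓ m x (uu m) < Wk T t hbar B Q R ℓ m x + 1 / (m + 1) := huu m
      have huk : PS T t hbar B Q R ℓ k x (uu k) < Wk T t hbar B Q R ℓ k x + 1 / (k + 1) := huu k
      have hWm : Wk T t hbar B Q R ℓ m x ≤ L := hWkL m
      linarith
    -- coordinatewise Cauchy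
    have hcauchy : ∀ j : ℕ, CauchySeq (fun k => uu k (ℓ + j + 1)) := by
      intro j
      rw [Metric.cauchySeq_iff']
      intro ε hε
      have h1 : Tendsto (fun k : ℕ => 2 * (L - Wk T t hbar B Q R ℓ k x) + 4 * (1 / (k + 1)))
          atTop (𝓝 0) := by
        have ha : Tendsto (fun k : ℕ => 2 * (L - Wk T t hbar B Q R ℓ k x)) atTop (𝓝 0) := by
          have := (tendsto_const_nhds (x := L)).sub htend
          have h2 := this.const_mul 2
          simpa using h2
        have hb : Tendsto (fun k : ℕ => 4 * (1 / ((k:ℝ) + 1))) atTop (𝓝 0) := by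
          have := (tendsto_one_div_add_atTop_nhds_zero_nat (𝕜 := ℝ)).const_mul 4
          simpa using this
        have := ha.add hb
        simpa using this
      have h2 : ∀ᶠ k : ℕ in atTop,
          2 * (L - Wk T t hbar B Q R ℓ k x) + 4 * (1 / (k + 1)) < δ * ε ^ 2 :=
        h1.eventually_lt_const (by positivity)
      have h3 : ∀ᶠ k : ℕ in atTop, j + 1 ≤ k := eventually_ge_atTop (j + 1)
      obtain ⟨N, hN⟩ := (h2.and h3).exists
      refine ⟨N, fun n hn => ?_⟩
      have hkey := key N n hn
      have hterm : ‖uu n (ℓ + j + 1) - uu N (ℓ + j + 1)‖ ^ 2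
          ≤ ∑ i ∈ Finset.range N, ‖uu n (ℓ + i + 1) - uu N (ℓ + i + 1)‖ ^ 2 :=
        Finset.single_le_sum (f := fun i => ‖uu n (ℓ + i + 1) - uu N (ℓ + i + 1)‖ ^ 2)
          (fun i _ => sq_nonneg _) (Finset.mem_range.2 (show j < N by omega))
      have hmono1 : (1 : ℝ) / (n + 1) ≤ 1 / (N + 1) := by
        apply one_div_le_one_div_of_le (by positivity)
        have : (N:ℝ) ≤ n := by exact_mod_cast hn
        linarith
      have hub : δ * ‖uu n (ℓ + j + 1) - uu N (ℓ + j + 1)‖ ^ 2 < δ * ε ^ 2 := by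
        have hδS : δ * ‖uu n (ℓ + j + 1) - uu N (ℓ + j + 1)‖ ^ 2
            ≤ δ * ∑ i ∈ Finset.range N, ‖uu n (ℓ + i + 1) - uu N (ℓ + i + 1)‖ ^ 2 :=
          mul_le_mul_of_nonneg_left hterm (le_of_lt hδ)
        calc δ * ‖uu n (ℓ + j + 1) - uu N (ℓ + j + 1)‖ ^ 2
            ≤ δ * ∑ i ∈ Finset.range N, ‖uu n (ℓ + i + 1) - uu N (ℓ + i + 1)‖ ^ 2 := hδS
          _ ≤ 2 * (L - Wk T t hbar B Q R ℓ N x) + 2 * (1 / (N + 1)) + 2 * (1 / (n + 1)) := hkey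
          _ ≤ 2 * (L - Wk T t hbar B Q R ℓ N x) + 4 * (1 / (N + 1)) := by linarith
          _ < δ * ε ^ 2 := hN.1
      have hsq : ‖uu n (ℓ + j + 1) - uu N (ℓ + j + 1)‖ ^ 2 < ε ^ 2 :=
        lt_of_mul_lt_mul_left hub (le_of_lt hδ)
      rw [dist_eq_norm]
      nlinarith [norm_nonneg (uu n (ℓ + j + 1) - uu N (ℓ + j + 1)), hε, hsq]
    have hlim : ∀ j : ℕ, ∃ v : U, Tendsto (fun k => uu k (ℓ + j + 1)) atTop (𝓝 v) :=
      fun j => cauchySeq_tendsto_of_complete (hcauchy j)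
    choose vv hvv using hlim
    set uinf : ℕ → U := fun i => if h : ℓ + 1 ≤ i then vv (i - ℓ - 1) else 0 with huinf
    have huinfc : ∀ j : ℕ, uinf (ℓ + j + 1) = vv j := by
      intro j
      simp only [huinf]
      rw [dif_pos (by omega)]
      congr 1
      omega
    have hconv : ∀ j : ℕ, Tendsto (fun k => uu k (ℓ + j + 1)) atTop (𝓝 (uinf (ℓ + j + 1))) := by
      intro j; rw [huinfc]; exact hvv j
    have hXconv : ∀ m : ℕ, Tendsto (fun k => xplusFrom T t hbar B ℓ x (uu k) m) atTop
        (𝓝 (xplusFrom T t hbar B ℓ x uinf m)) := by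
      intro m
      induction m with
      | zero => exact tendsto_const_nhds
      | succ m ih =>
        simp only [xplusFrom]
        exact Tendsto.add
          (((T (t (ℓ + m + 1) - t (ℓ + m))).continuous.tendsto _).comp ih)
          (((B (nu hbar (ℓ + m + 1))).continuous.tendsto _).comp (hconv m))
    have hYconv : ∀ m : ℕ, Tendsto (fun k => xtrajFrom T t hbar B ℓ x (uu k) (m + 1)) atTop
        (𝓝 (xtrajFrom T t hbar B ℓ x uinf (m + 1))) := by
      intro m
      simp only [xtrajFrom]
      exact ((T (t (ℓ + m + 1) - t (ℓ + m))).continuous.tendsto _).comp (hXconv m)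
    have hPSconv : ∀ kk : ℕ, Tendsto (fun k => PS T t hbar B Q R ℓ kk x (uu k)) atTop
        (𝓝 (PS T t hbar B Q R ℓ kk x uinf)) := by
      intro kk
      unfold PS stage
      refine tendsto_finset_sum _ fun m _ => ?_
      exact Tendsto.add
        (Tendsto.inner (((Q (ℓ + m + 1)).continuous.tendsto _).comp (hYconv m)) (hYconv m))
        (Tendsto.inner (((R (ℓ + m + 1)).continuous.tendsto _).comp (hconv m)) (hconv m))
    have hPSle : ∀ kk : ℕ, PS T t hbar B Q R ℓ kk x uinf ≤ L := by
      intro kk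
      have hg : Tendsto (fun k : ℕ => L + 1 / ((k:ℝ) + 1)) atTop (𝓝 L) := by
        have := (tendsto_const_nhds (x := L)).add tendsto_one_div_add_atTop_nhds_zero_nat
        simpa using this
      refine le_of_tendsto_of_tendsto (hPSconv kk) hg ?_
      filter_upwards [eventually_ge_atTop kk] with k hk
      have h1 : PS T t hbar B Q R ℓ kk x (uu k) ≤ PS T t hbar B Q R ℓ k x (uu k) :=
        PS_mono_k T t hbar B Q R hQ0 hR0 ℓ hk x (uu k)
      have h2 := huu k
      have h3 := hWkL k
      linarith
    have hsum_u : Summable (fun j => ‖uinf (ℓ + j + 1)‖ ^ 2) := by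
      apply summable_of_sum_range_le (c := L / δ) (fun j => sq_nonneg _)
      intro n
      have h1 := PS_ctrl_lower T t hbar B Q R hQ0 hR0 hδR ℓ n x uinf
      have h2 := hPSle n
      rw [le_div_iff₀ hδ]
      calc (∑ j ∈ Finset.range n, ‖uinf (ℓ + j + 1)‖ ^ 2) * δ
          = δ * ∑ j ∈ Finset.range n, ‖uinf (ℓ + j + 1)‖ ^ 2 := by ring
        _ ≤ PS T t hbar B Q R ℓ n x uinf := h1
        _ ≤ L := h2
    have hsum_Y : Summable (fun j => ‖xtrajFrom T t hbar B ℓ x uinf (j + 1)‖ ^ 2) := by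
      apply summable_of_sum_range_le (c := L / δ) (fun j => sq_nonneg _)
      intro n
      have h1 := PS_traj_lower T t hbar B Q R hQ0 hR0 hδQ ℓ n x uinf
      have h2 := hPSle n
      rw [le_div_iff₀ hδ]
      calc (∑ j ∈ Finset.range n, ‖xtrajFrom T t hbar B ℓ x uinf (j + 1)‖ ^ 2) * δ
          = δ * ∑ j ∈ Finset.range n, ‖xtrajFrom T t hbar B ℓ x uinf (j + 1)‖ ^ 2 := by ring
        _ ≤ PS T t hbar B Q R ℓ n x uinf := h1
        _ ≤ L := h2
    have hmem : uinf ∈ UadFrom T t hbar B ℓ x := ⟨hsum_u, hsum_Y⟩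
    have hJ : Jinf T t hbar B Q R ℓ x uinf ≤ L := by
      rw [Jinf_eq_tsum_stage]
      exact Summable.tsum_le_of_sum_range_le
        (stage_summable T t hbar B Q R hQ0 hR0 hQb hRb ℓ x uinf hmem)
        (fun n => hPSle n)
    calc Vinf T t hbar B Q R ℓ x ≤ Jinf T t hbar B Q R ℓ x uinf :=
          csInf_le hSbdd ⟨uinf, hmem, rfl⟩
      _ ≤ L := hJ
  · -- L ≤ Vinf
    refine le_csInf hSne ?_
    rintro c ⟨u, hu, rfl⟩
    exact ciSup_le fun k => Wk_le_Jinf T t hbar B Q R hQ0 hR0 hQb hRb ℓ k x u hu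

end Proof6

section Proof7
set_option linter.unusedSectionVars false

open Filter Topology

variable {E : Type*} [NormedAddCommGroup E] [InnerProductSpace ℝ E] [CompleteSpace E]

lemma quadratic_rep_exists (W : E → ℝ) (h0 : ∀ x, 0 ≤ W x)
    (hs : ∀ (a : ℝ) (x : E), W (a • x) = a ^ 2 * W x)
    (hp : ∀ x y : E, W (x + y) + W (x - y) = 2 * W x + 2 * W y)
    {C : ℝ} (hC0 : 0 ≤ C) (hC : ∀ x, W x ≤ C * ‖x‖ ^ 2) :
    ∃ P : E →L[ℝ] E, IsSelfAdjoint P ∧ ∀ x, ⟪P x, x⟫ = W x := by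
  classical
  set b : E → E → ℝ := fun x y => (W (x + y) - W (x - y)) / 4 with hb
  have hbdef : ∀ x y, b x y = (W (x + y) - W (x - y)) / 4 := fun x y => rfl
  have hW0 : W 0 = 0 := by
    have := hs 0 0
    simpa using this
  have hWeven : ∀ x : E, W (-x) = W x := by
    intro x
    have := hs (-1) x
    simpa using this
  have hbsymm : ∀ x y, b x y = b y x := by
    intro x y
    rw [hbdef, hbdef]
    have e1 : x + y = y + x := by abel
    have e2 : x - y = -(y - x) := by abel
    rw [e1, e2, hWeven]
  have hbself : ∀ x, b x x = W x := by
    intro x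
    rw [hbdef]
    have e1 : x + x = (2:ℝ) • x := (two_smul ℝ x).symm
    rw [e1, hs, sub_self, hW0]
    norm_num
  have hbkey : ∀ x z y : E, b (x + z) y + b (x - z) y = 2 * b x y := by
    intro x z y
    have h1 := hp (x + y) z
    have h2 := hp (x - y) z
    rw [hbdef, hbdef, hbdef]
    have e1 : x + z + y = x + y + z := by abel
    have e2 : x + z - y = x - y + z := by abel
    have e3 : x - z + y = x + y - z := by abel
    have e4 : x - z - y = x - y - z := by abel
    rw [e1, e2, e3, e4]
    linarith
  have hb0 : ∀ y, b 0 y = 0 := by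
    intro y
    rw [hbdef, zero_add, zero_sub, hWeven]
    ring
  have hbdouble : ∀ x y, b (x + x) y = 2 * b x y := by
    intro x y
    have := hbkey x x y
    rw [sub_self, hb0] at this
    linarith
  have hbadd : ∀ u v y : E, b (u + v) y = b u y + b v y := by
    intro u v y
    have e1 : (1/2 : ℝ) • (u + v) + (1/2 : ℝ) • (u - v) = u := by
      rw [← smul_add, show u + v + (u - v) = (2:ℝ) • u by rw [two_smul]; abel, smul_smul]
      norm_num
    have e2 : (1/2 : ℝ) • (u + v) - (1/2 : ℝ) • (u - v) = v := by
      rw [← smul_sub, show u + v - (u - v) = (2:ℝ) • v by rw [two_smul]; abel, smul_smul]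
      norm_num
    have hk := hbkey ((1/2 : ℝ) • (u + v)) ((1/2 : ℝ) • (u - v)) y
    rw [e1, e2] at hk
    have e3 : ((1/2:ℝ) • (u + v)) + ((1/2:ℝ) • (u + v)) = u + v := by
      rw [← two_smul ℝ ((1/2:ℝ) • (u + v)), smul_smul]
      norm_num
    have hd := hbdouble ((1/2:ℝ) • (u + v)) y
    rw [e3] at hd
    linarith
  -- rational homogeneity in the first variable
  have hrat : ∀ (q : ℚ) (x y : E), b ((q : ℝ) • x) y = (q : ℝ) * b x y := by
    intro q x y
    set F : ℝ →+ ℝ := AddMonoidHom.mk' (fun a => b (a • x) y)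
      (fun a c => by
        show b ((a + c) • x) y = b (a • x) y + b (c • x) y
        rw [add_smul]; exact hbadd _ _ _) with hF
    have hFq := F.toRatLinearMap.map_smul q (1 : ℝ)
    have hF1 : ∀ a : ℝ, F.toRatLinearMap a = b (a • x) y := fun a => rfl
    rw [hF1, hF1, Rat.smul_one_eq_cast] at hFq
    rw [hFq, Rat.smul_def, one_smul]
  -- Cauchy–Schwarz
  have hexp : ∀ x y : E, W (x + y) = W x + W y + 2 * b x y := by
    intro x y
    have := hp x y
    rw [hbdef]
    linarith
  have hcs : ∀ x y : E, (b x y) ^ 2 ≤ W x * W y := by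
    intro x y
    have hq : ∀ q : ℚ, 0 ≤ W y * ((q:ℝ) * (q:ℝ)) + (2 * b x y) * (q:ℝ) + W x := by
      intro q
      have h1 : W (x + (q:ℝ) • y) = W x + (q:ℝ)^2 * W y + 2 * ((q:ℝ) * b x y) := by
        rw [hexp, hs]
        have : b x ((q:ℝ) • y) = (q:ℝ) * b x y := by
          rw [hbsymm, hrat, hbsymm]
        rw [this]
      have h2 := h0 (x + (q:ℝ) • y)
      rw [h1] at h2
      nlinarith [h2]
    have hall : ∀ s : ℝ, 0 ≤ W y * (s * s) + (2 * b x y) * s + W x := by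
      intro s
      have hgc : Continuous fun s : ℝ => W y * (s * s) + (2 * b x y) * s + W x :=
        ((continuous_const.mul (continuous_id.mul continuous_id)).add
          (continuous_const.mul continuous_id)).add continuous_const
      have hclosed : IsClosed {s : ℝ | 0 ≤ W y * (s * s) + (2 * b x y) * s + W x} :=
        isClosed_le continuous_const hgc
      have hsub : Set.range ((↑) : ℚ → ℝ) ⊆ {s : ℝ | 0 ≤ W y * (s * s) + (2 * b x y) * s + W x} := by
        rintro _ ⟨q, rfl⟩
        exact hq q
      have hdense : closure (Set.range ((↑) : ℚ → ℝ)) = Set.univ := Rat.denseRange_cast.closure_range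
      have : (Set.univ : Set ℝ) ⊆ {s : ℝ | 0 ≤ W y * (s * s) + (2 * b x y) * s + W x} := by
        rw [← hdense]
        calc closure (Set.range ((↑) : ℚ → ℝ))
            ⊆ closure {s : ℝ | 0 ≤ W y * (s * s) + (2 * b x y) * s + W x} := closure_mono hsub
          _ = _ := hclosed.closure_eq
      exact this (Set.mem_univ s)
    have := discrim_le_zero hall
    unfold discrim at this
    nlinarith [this]
  have habs : ∀ x y : E, |b x y| ≤ Real.sqrt (W x * W y) := by
    intro x y
    rw [← Real.sqrt_sq_eq_abs]
    exact Real.sqrt_le_sqrt (hcs x y)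
  -- real homogeneity in the first variable
  have hhom : ∀ (a : ℝ) (x y : E), b (a • x) y = a * b x y := by
    intro a x y
    set F : ℝ →+ ℝ := AddMonoidHom.mk' (fun c => b (c • x) y)
      (fun c d => by
        show b ((c + d) • x) y = b (c • x) y + b (d • x) y
        rw [add_smul]; exact hbadd _ _ _) with hF
    have hFa : ∀ c : ℝ, F c = b (c • x) y := fun c => rfl
    have hlip : LipschitzWith (Real.toNNReal (Real.sqrt (W x * W y))) (fun c : ℝ => F c) := by
      apply LipschitzWith.of_dist_le_mul
      intro c d
      rw [Real.dist_eq, Real.dist_eq, Real.coe_toNNReal _ (Real.sqrt_nonneg _), ← map_sub]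
      calc |F (c - d)| = |b ((c - d) • x) y| := by rw [hFa]
        _ ≤ Real.sqrt (W ((c - d) • x) * W y) := habs _ _
        _ = Real.sqrt ((c - d) ^ 2 * (W x * W y)) := by rw [hs]; ring_nf
        _ = |c - d| * Real.sqrt (W x * W y) := by
            rw [Real.sqrt_mul (sq_nonneg _), Real.sqrt_sq_eq_abs]
        _ = Real.sqrt (W x * W y) * |c - d| := mul_comm _ _
    have hcont : Continuous fun c : ℝ => F c := hlip.continuous
    have hclosed : IsClosed {c : ℝ | F c = c * b x y} :=
      isClosed_eq hcont (continuous_mul_right _)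
    have hsub : Set.range ((↑) : ℚ → ℝ) ⊆ {c : ℝ | F c = c * b x y} := by
      rintro _ ⟨q, rfl⟩
      show F (q:ℝ) = (q:ℝ) * b x y
      rw [hFa]
      exact hrat q x y
    have hdense : closure (Set.range ((↑) : ℚ → ℝ)) = Set.univ := Rat.denseRange_cast.closure_range
    have hall : (Set.univ : Set ℝ) ⊆ {c : ℝ | F c = c * b x y} := by
      rw [← hdense]
      calc closure (Set.range ((↑) : ℚ → ℝ)) ⊆ closure {c : ℝ | F c = c * b x y} :=
            closure_mono hsub
        _ = _ := hclosed.closure_eq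
    have hmem := hall (Set.mem_univ a)
    simp only [Set.mem_setOf_eq] at hmem
    rw [hFa] at hmem
    exact hmem
  -- boundedness
  have hbb : ∀ x y : E, |b x y| ≤ C * ‖x‖ * ‖y‖ := by
    intro x y
    calc |b x y| ≤ Real.sqrt (W x * W y) := habs x y
      _ ≤ Real.sqrt ((C * ‖x‖ ^ 2) * (C * ‖y‖ ^ 2)) := by
          apply Real.sqrt_le_sqrt
          apply mul_le_mul (hC x) (hC y) (h0 y) (by positivity)
      _ = C * ‖x‖ * ‖y‖ := by
          rw [show (C * ‖x‖ ^ 2) * (C * ‖y‖ ^ 2) = (C * ‖x‖ * ‖y‖) ^ 2 by ring,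
            Real.sqrt_sq (by positivity)]
  -- construct the operator
  set bl : E → (E →ₗ[ℝ] ℝ) := fun x =>
    { toFun := fun y => b x y
      map_add' := fun y z => by
        show b x (y + z) = b x y + b x z
        rw [hbsymm x (y + z), hbadd, hbsymm y x, hbsymm z x]
      map_smul' := fun a y => by
        show b x (a • y) = (RingHom.id ℝ) a • b x y
        simp only [RingHom.id_apply, smul_eq_mul]
        rw [hbsymm x (a • y), hhom, hbsymm y x] } with hbl
  have hblapp : ∀ x y, bl x y = b x y := fun x y => rfl
  set φ : E → (E →L[ℝ] ℝ) := fun x =>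
    LinearMap.mkContinuous (bl x) (C * ‖x‖) (fun y => by
      rw [show ‖bl x y‖ = |b x y| from rfl]
      calc |b x y| ≤ C * ‖x‖ * ‖y‖ := hbb x y
        _ = (C * ‖x‖) * ‖y‖ := by ring) with hφ
  have hφapp : ∀ x y, φ x y = b x y := fun x y => rfl
  have hφnorm : ∀ x, ‖φ x‖ ≤ C * ‖x‖ := fun x =>
    LinearMap.mkContinuous_norm_le _ (by positivity) _
  set Pl : E →ₗ[ℝ] E :=
    { toFun := fun x => (InnerProductSpace.toDual ℝ E).symm (φ x)
      map_add' := fun x z => by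
        show (InnerProductSpace.toDual ℝ E).symm (φ (x + z))
          = (InnerProductSpace.toDual ℝ E).symm (φ x) + (InnerProductSpace.toDual ℝ E).symm (φ z)
        have hφadd : φ (x + z) = φ x + φ z := by
          refine ContinuousLinearMap.ext fun y => ?_
          show φ (x + z) y = φ x y + φ z y
          rw [hφapp, hφapp, hφapp, hbadd]
        rw [hφadd, map_add]
      map_smul' := fun a x => by
        simp only [RingHom.id_apply]
        show (InnerProductSpace.toDual ℝ E).symm (φ (a • x))
          = a • (InnerProductSpace.toDual ℝ E).symm (φ x)
        have hφsmul : φ (a • x) = a • φ x := by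
          refine ContinuousLinearMap.ext fun y => ?_
          show φ (a • x) y = (a • φ x) y
          rw [hφapp]
          show b (a • x) y = a • (φ x y)
          rw [hφapp, hhom]
          rfl
        rw [hφsmul, map_smul] } with hPl
  set P : E →L[ℝ] E := Pl.mkContinuous C (fun x => by
    show ‖(InnerProductSpace.toDual ℝ E).symm (φ x)‖ ≤ C * ‖x‖
    rw [LinearIsometryEquiv.norm_map]
    exact hφnorm x) with hP
  have hPapp : ∀ x y : E, ⟪P x, y⟫ = b x y := by
    intro x y
    have h1 : P x = (InnerProductSpace.toDual ℝ E).symm (φ x) := rfl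
    rw [h1, InnerProductSpace.toDual_symm_apply]
    exact hφapp x y
  refine ⟨P, ?_, fun x => by rw [hPapp, hbself]⟩
  rw [ContinuousLinearMap.isSelfAdjoint_iff_isSymmetric]
  intro x y
  show ⟪P x, y⟫ = ⟪x, P y⟫
  rw [hPapp, hbsymm, ← hPapp, real_inner_comm]

lemma quadratic_rep_unique (P P' : E →L[ℝ] E) (hP : IsSelfAdjoint P) (hP' : IsSelfAdjoint P')
    (h : ∀ x, ⟪P x, x⟫ = ⟪P' x, x⟫) : P = P' := by
  have hs := ContinuousLinearMap.isSelfAdjoint_iff_isSymmetric.1 hP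
  have hs' := ContinuousLinearMap.isSelfAdjoint_iff_isSymmetric.1 hP'
  have key : ∀ (S : E →L[ℝ] E), (S : E →ₗ[ℝ] E).IsSymmetric → ∀ x y : E,
      ⟪S x, y⟫ = (⟪S (x + y), x + y⟫ - ⟪S x, x⟫ - ⟪S y, y⟫) / 2 := by
    intro S hS x y
    have h1 : ⟪S (x + y), x + y⟫ = ⟪S x, x⟫ + ⟪S x, y⟫ + ⟪S y, x⟫ + ⟪S y, y⟫ := by
      rw [map_add]
      simp only [inner_add_left, inner_add_right]
      ring
    have h2 : ⟪S y, x⟫ = ⟪S x, y⟫ := by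
      have h3 := hS y x
      simp only [ContinuousLinearMap.coe_coe] at h3
      rw [h3, real_inner_comm]
    rw [h2] at h1
    linarith
  refine ContinuousLinearMap.ext fun x => ?_
  refine ext_inner_right ℝ fun y => ?_
  rw [key P hs x y, key P' hs' x y, h, h, h]

end Proof7

section Main
open Filter Topology

/-- Lemma 2.5(i): the infinite-horizon value function is a quadratic form given by a
unique self-adjoint nonnegative operator. -/
theorem value_function_quadratic
    {H U : Type*} [NormedAddCommGroup H] [InnerProductSpace ℝ H]
    [CompleteSpace H] [NormedAddCommGroup U] [InnerProductSpace ℝ U] [CompleteSpace U]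
    (T : ℝ → H →L[ℝ] H) (hT0 : T 0 = 1)
    (hTadd : ∀ a b : ℝ, 0 ≤ a → 0 ≤ b → T (a + b) = T a ∘L T b)
    (hTcont : ∀ x : H, ContinuousOn (fun τ : ℝ => T τ x) (Set.Ici (0 : ℝ)))
    (hbar : ℕ) (hhbar : 0 < hbar)
    (t : ℕ → ℝ) (ht0 : t 0 = 0) (htmono : StrictMono t)
    (htper : ∀ j : ℕ, t (j + hbar) = t j + t hbar)
    (B : ℕ → U →L[ℝ] H)
    (Q : ℕ → H →L[ℝ] H) (R : ℕ → U →L[ℝ] U)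
    (hQ : MemMCoercive hbar Q) (hR : MemMCoercive hbar R)
    (hAd : ∀ x0 : H, (UadFrom T t hbar B 0 x0).Nonempty) :
    ∀ ℓ : ℕ, ∃! P : H →L[ℝ] H, IsNonnegOp P ∧
      ∀ x0 : H, Vinf T t hbar B Q R ℓ x0 = ⟪P x0, x0⟫ := by
  intro ℓ
  -- basic properties of the weights
  have hQsym : ∀ j, 1 ≤ j → ∀ v w : H, ⟪Q j v, w⟫ = ⟪v, Q j w⟫ := by
    intro j hj v w
    have h1 := (ContinuousLinearMap.isSelfAdjoint_iff_isSymmetric.1 (hQ.1 j hj).1.1) v w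
    simpa using h1
  have hRsym : ∀ j, 1 ≤ j → ∀ v w : U, ⟪R j v, w⟫ = ⟪v, R j w⟫ := by
    intro j hj v w
    have h1 := (ContinuousLinearMap.isSelfAdjoint_iff_isSymmetric.1 (hR.1 j hj).1.1) v w
    simpa using h1
  have hQ0 : ∀ j, 1 ≤ j → ∀ v : H, 0 ≤ ⟪Q j v, v⟫ := fun j hj v => (hQ.1 j hj).1.2 v
  have hR0 : ∀ j, 1 ≤ j → ∀ v : U, 0 ≤ ⟪R j v, v⟫ := fun j hj v => (hR.1 j hj).1.2 v
  obtain ⟨CQ, hCQ0, hQb⟩ := exists_opnorm_bound hhbar Q hQ.2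
  obtain ⟨CR, hCR0, hRb⟩ := exists_opnorm_bound hhbar R hR.2
  obtain ⟨δ, hδ, hδQR⟩ := exists_uniform_delta Q R hhbar hQ hR
  have hδQ : ∀ j, 1 ≤ j → ∀ v : H, δ * ‖v‖ ^ 2 ≤ ⟪Q j v, v⟫ := fun j hj => (hδQR j hj).1
  have hδR : ∀ j, 1 ≤ j → ∀ w : U, δ * ‖w‖ ^ 2 ≤ ⟪R j w, w⟫ := fun j hj => (hδQR j hj).2
  have hAdl : ∀ y : H, (UadFrom T t hbar B ℓ y).Nonempty :=
    fun y => Uad_shift_nonempty T t hbar B hhbar htper hAd ℓ y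
  have hVsup : ∀ x : H, Vinf T t hbar B Q R ℓ x = ⨆ k, Wk T t hbar B Q R ℓ k x :=
    fun x => Vinf_eq_iSup_Wk T t hbar B Q R hQsym hRsym hQ0 hR0 hQb hRb hδ hδQ hδR ℓ hAdl x
  obtain ⟨C, hC0, hCb⟩ :=
    Wk_quad_bound T t hbar B Q R hQsym hRsym hQ0 hR0 hQb hRb ℓ hAdl
  have hbdd : ∀ x : H, BddAbove (Set.range fun k => Wk T t hbar B Q R ℓ k x) := by
    intro x
    refine ⟨C * ‖x‖ ^ 2, ?_⟩
    rintro _ ⟨k, rfl⟩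
    exact hCb k x
  have htendV : ∀ x : H, Tendsto (fun k => Wk T t hbar B Q R ℓ k x) atTop
      (𝓝 (Vinf T t hbar B Q R ℓ x)) := by
    intro x
    rw [hVsup]
    exact tendsto_atTop_ciSup
      (fun a b hab => Wk_mono T t hbar B Q R hQ0 hR0 ℓ hab x) (hbdd x)
  set V : H → ℝ := Vinf T t hbar B Q R ℓ with hV
  have hV0 : ∀ x, 0 ≤ V x := by
    intro x
    rw [hVsup]
    calc (0:ℝ) ≤ Wk T t hbar B Q R ℓ 0 x := Wk_nonneg T t hbar B Q R hQ0 hR0 ℓ 0 x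
      _ ≤ ⨆ k, Wk T t hbar B Q R ℓ k x := le_ciSup (hbdd x) 0
  have hVC : ∀ x, V x ≤ C * ‖x‖ ^ 2 := by
    intro x
    rw [hVsup]
    exact ciSup_le fun k => hCb k x
  have hVs : ∀ (a : ℝ) (x : H), V (a • x) = a ^ 2 * V x := by
    intro a x
    have h1 := htendV (a • x)
    have h2 : Tendsto (fun k => Wk T t hbar B Q R ℓ k (a • x)) atTop (𝓝 (a ^ 2 * V x)) := by
      have h3 : (fun k => Wk T t hbar B Q R ℓ k (a • x))
          = fun k => a ^ 2 * Wk T t hbar B Q R ℓ k x := by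
        funext k
        exact Wk_smul T t hbar B Q R hQsym hRsym hQ0 hR0 ℓ k a x
      rw [h3]
      exact (htendV x).const_mul _
    exact tendsto_nhds_unique h1 h2
  have hVp : ∀ x y : H, V (x + y) + V (x - y) = 2 * V x + 2 * V y := by
    intro x y
    have h1 : Tendsto (fun k => Wk T t hbar B Q R ℓ k (x + y) + Wk T t hbar B Q R ℓ k (x - y))
        atTop (𝓝 (V (x + y) + V (x - y))) := (htendV (x + y)).add (htendV (x - y))
    have h2 : Tendsto (fun k => Wk T t hbar B Q R ℓ k (x + y) + Wk T t hbar B Q R ℓ k (x - y))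
        atTop (𝓝 (2 * V x + 2 * V y)) := by
      have h3 : (fun k => Wk T t hbar B Q R ℓ k (x + y) + Wk T t hbar B Q R ℓ k (x - y))
          = fun k => 2 * Wk T t hbar B Q R ℓ k x + 2 * Wk T t hbar B Q R ℓ k y := by
        funext k
        exact Wk_par T t hbar B Q R hQsym hRsym hQ0 hR0 ℓ k x y
      rw [h3]
      exact ((htendV x).const_mul 2).add ((htendV y).const_mul 2)
    exact tendsto_nhds_unique h1 h2
  obtain ⟨P, hPsa, hPrep⟩ := quadratic_rep_exists V hV0 hVs hVp hC0 hVC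
  refine ⟨P, ⟨⟨hPsa, fun x => by rw [hPrep]; exact hV0 x⟩, fun x => (hPrep x).symm⟩, ?_⟩
  rintro P' ⟨⟨hP'sa, _⟩, hP'rep⟩
  refine quadratic_rep_unique P' P hP'sa hPsa fun x => ?_
  rw [← hP'rep x, hPrep x]

end Main

end ImpulseControl
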